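/- For every choice of the parameter formulas δxy, δxz, p0, p1, the set dra is closed under the operations +, −, ∘, ⌣ and contains Id; that is, Dra = ⟨dra, +, −, ∘, ⌣, Id⟩ is an algebra. -/

import Mathlib

/- Core: the logic Ld3 : syntax, proof system, semantics, Gödel numbering. -/

inductive Var : Type
  | x
  | y
  | z
deriving DecidableEq

def Var.toNat : Var → Nat
  | .x => 0
  | .y => 1
  | .z => 2

/-- Formulas of the logic `Ld3`: one atomic formula `P(x,y,z)`, connectives `∨, ¬`
and quantifiers `∃x, ∃y, ∃z`. -/
inductive Fmd3 : Type
  | P : Fmd3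
  | or : Fmd3 → Fmd3 → Fmd3
  | not : Fmd3 → Fmd3
  | ex : Var → Fmd3 → Fmd3
deriving DecidableEq

namespace Fmd3

def and (φ ψ : Fmd3) : Fmd3 := .not (.or (.not φ) (.not ψ))

def imp (φ ψ : Fmd3) : Fmd3 := .or (.not φ) ψ

def iff (φ ψ : Fmd3) : Fmd3 := (φ.imp ψ).and (ψ.imp φ)

def all (v : Var) (φ : Fmd3) : Fmd3 := .not (.ex v (.not φ))

def freeVars : Fmd3 → Finset Var
  | .P => {Var.x, Var.y, Var.z}
  | .or a b => a.freeVars ∪ b.freeVars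
  | .not a => a.freeVars
  | .ex v a => a.freeVars.erase v

/-- `Fmd3⁰`: sentences. -/
def IsSentence (φ : Fmd3) : Prop := φ.freeVars = ∅

/-- `Fmd3¹`: formulas whose only free variable is `x`. -/
def OneFree (φ : Fmd3) : Prop := φ.freeVars ⊆ {Var.x}

/-- `φ` is a propositional tautology: every Boolean valuation that respects
`∨` and `¬` (treating other formulas as propositional atoms) makes `φ` true. -/
def Taut (φ : Fmd3) : Prop :=
  ∀ v : Fmd3 → Bool,
    (∀ a b : Fmd3, v (.or a b) = (v a || v b)) →
    (∀ a : Fmd3, v (.not a) = !(v a)) →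
    v φ = true

/-- Satisfaction of an `Fmd3` formula in a model `(M, R)` under evaluation `e`. -/
def Sat (M : Type) (R : M → M → M → Prop) : Fmd3 → (Var → M) → Prop
  | .P, e => R (e .x) (e .y) (e .z)
  | .or a b, e => Sat M R a e ∨ Sat M R b e
  | .not a, e => ¬ Sat M R a e
  | .ex v a, e => ∃ m : M, Sat M R a (Function.update e v m)

/-- A standard (injective) Gödel numbering of `Fmd3`. -/
def encode : Fmd3 → Nat
  | .P => 0
  | .or a b => 4 * Nat.pair a.encode b.encode + 1
  | .not a => 4 * a.encode + 2
  | .ex v a => 4 * Nat.pair v.toNat a.encode + 3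

end Fmd3

/-- The Hilbert-style proof system `⊢d3`, with rules Modus Ponens and Generalization,
and axiom schemes ((1))–((7)). -/
inductive Prf (T : Set Fmd3) : Fmd3 → Prop
  | hyp {φ : Fmd3} : φ ∈ T → Prf T φ
  | taut {φ : Fmd3} : φ.Taut → Prf T φ
  | ax2 (v : Var) (φ ψ : Fmd3) :
      Prf T ((Fmd3.all v (φ.imp ψ)).imp ((Fmd3.ex v φ).imp (Fmd3.ex v ψ)))
  | ax3 (v : Var) (φ : Fmd3) : Prf T (φ.imp (.ex v φ))
  | ax4 (v : Var) (φ : Fmd3) : Prf T ((Fmd3.ex v (.ex v φ)).imp (.ex v φ))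
  | ax5 (v : Var) (φ ψ : Fmd3) :
      Prf T ((Fmd3.ex v (φ.or ψ)).iff ((Fmd3.ex v φ).or (.ex v ψ)))
  | ax6 (v : Var) (φ : Fmd3) :
      Prf T ((Fmd3.ex v (.not (.ex v φ))).imp (.not (.ex v φ)))
  | ax7 (v w : Var) (φ : Fmd3) :
      Prf T ((Fmd3.ex v (.ex w φ)).imp (.ex w (.ex v φ)))
  | mp {φ ψ : Fmd3} : Prf T (φ.imp ψ) → Prf T φ → Prf T ψ
  | gen {φ : Fmd3} (v : Var) : Prf T φ → Prf T (.all v φ)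

/-- Semantic consequence for `Ld3`: every model of `T` satisfies `φ` under every
evaluation. -/
def SemConsD (T : Set Fmd3) (φ : Fmd3) : Prop :=
  ∀ (M : Type) (_ : Nonempty M) (R : M → M → M → Prop),
    (∀ ψ ∈ T, ∀ e : Var → M, ψ.Sat M R e) → ∀ e : Var → M, φ.Sat M R e

/-- Validity for `Ld3`. -/
def ValidD (φ : Fmd3) : Prop := SemConsD ∅ φ

/-- A set of `Fmd3`-formulas is recursive (decidable w.r.t. the standard
Gödel numbering). -/
def RecSetD (S : Set Fmd3) : Prop :=
  ∃ g : Nat → Bool, Computable g ∧ ∀ φ : Fmd3, φ ∈ S ↔ g φ.encode = true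

/- Parameter formulas δxy, δxz, p0, p1; simulated equality and substitution;
pairing axioms Ax and SAx; the relation-algebra and cylindric-algebra reducts. -/

structure Params where
  dxy : Fmd3
  dxz : Fmd3
  p0 : Fmd3
  p1 : Fmd3

/-- The required free-variable sets of the parameter formulas. -/
def GoodParams (P : Params) : Prop :=
  P.dxy.freeVars = {Var.x, Var.y} ∧ P.dxz.freeVars = {Var.x, Var.z} ∧
    P.p0.freeVars = {Var.x, Var.y} ∧ P.p1.freeVars = {Var.x, Var.y}

/-- A provably true formula. -/
def trueF (P : Params) : Fmd3 := P.dxy.or P.dxy.not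

/-- Simulated equality `u ≐ v` between variables. -/
def eqvF (P : Params) : Var → Var → Fmd3
  | .x, .y => P.dxy
  | .y, .x => P.dxy
  | .x, .z => P.dxz
  | .z, .x => P.dxz
  | .y, .z => .ex .x (P.dxy.and P.dxz)
  | .z, .y => .ex .x (P.dxy.and P.dxz)
  | _, _ => trueF P

/- Tarski-style simulated substitution `φ⟨u,v⟩` for `φ` with free variables
among `{x,y}`. -/
def sXZ (P : Params) (φ : Fmd3) : Fmd3 := .ex .y ((eqvF P .y .z).and φ)
def sYZ (P : Params) (φ : Fmd3) : Fmd3 := .ex .x ((eqvF P .x .y).and (sXZ P φ))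
def sYX (P : Params) (φ : Fmd3) : Fmd3 := .ex .z ((eqvF P .x .z).and (sYZ P φ))
def sZX (P : Params) (φ : Fmd3) : Fmd3 := .ex .y ((eqvF P .y .z).and (sYX P φ))
def sZY (P : Params) (φ : Fmd3) : Fmd3 := .ex .x ((eqvF P .x .z).and φ)
def sXX (P : Params) (φ : Fmd3) : Fmd3 := .ex .y ((eqvF P .x .y).and φ)
def sYY (P : Params) (φ : Fmd3) : Fmd3 := .ex .x ((eqvF P .x .y).and φ)
def sZZ (P : Params) (φ : Fmd3) : Fmd3 := .ex .x ((eqvF P .x .z).and (sXX P φ))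

def subst2 (P : Params) (φ : Fmd3) : Var → Var → Fmd3
  | .x, .y => φ
  | .x, .z => sXZ P φ
  | .y, .z => sYZ P φ
  | .y, .x => sYX P φ
  | .z, .x => sZX P φ
  | .z, .y => sZY P φ
  | .x, .x => sXX P φ
  | .y, .y => sYY P φ
  | .z, .z => sZZ P φ

/-- The third variable, distinct from two given distinct variables. -/
def third : Var → Var → Var
  | .x, .y => .z
  | .y, .x => .z
  | .x, .z => .y
  | .z, .x => .y
  | .y, .z => .x
  | .z, .y => .x
  | v, _ => v

def pform (P : Params) (k : Bool) (u v : Var) : Fmd3 :=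
  subst2 P (if k then P.p1 else P.p0) u v

/-- `u_i ≐ v_∅` for distinct `u`, `v`, where the binary sequence `i` is given
in reverse order. -/
def peqDrev (P : Params) (u v : Var) : List Bool → Fmd3
  | [] => eqvF P u v
  | [k] => pform P k u v
  | k :: rest => .ex (third u v) ((peqDrev P u (third u v) rest).and (pform P k (third u v) v))

def peqD2 (P : Params) (u v : Var) (i j : List Bool) : Fmd3 :=
  match j with
  | [] => peqDrev P u v i.reverse
  | _ => .ex (third u v)
      ((peqDrev P u (third u v) i.reverse).and (peqDrev P v (third u v) j.reverse))

/-- The formula `u_i ≐ v_j` simulating `p_{i_n} ⋯ p_{i_0} u = p_{j_k} ⋯ p_{j_0} v`. -/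
def peq (P : Params) (u : Var) (i : List Bool) (v : Var) (j : List Bool) : Fmd3 :=
  if i = [] ∧ j = [] then eqvF P u v
  else if u = v then
    match u with
    | .x => .ex .y ((eqvF P .x .y).and (peqD2 P .x .y i j))
    | .y => .ex .x ((eqvF P .x .y).and (peqD2 P .x .y i j))
    | .z => .ex .x ((peqDrev P .z .x i.reverse).and (peqDrev P .z .x j.reverse))
  else peqD2 P u v i j

def conjF (P : Params) : List Fmd3 → Fmd3
  | [] => trueF P
  | [a] => a
  | a :: rest => a.and (conjF P rest)

def vars3 : List Var := [.x, .y, .z]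

def seqsLen : Nat → List (List Bool)
  | 0 => [[]]
  | n + 1 => (seqsLen n).flatMap fun l => [false :: l, true :: l]

/-- `H`: all binary sequences of length at most 3. -/
def seqH : List (List Bool) := seqsLen 0 ++ seqsLen 1 ++ seqsLen 2 ++ seqsLen 3

def seqH2 : List (List Bool) := seqsLen 0 ++ seqsLen 1 ++ seqsLen 2

/-- (A1): transitivity of `≐`. -/
def axA1 (P : Params) : List Fmd3 :=
  vars3.flatMap fun u => vars3.flatMap fun v => vars3.flatMap fun w =>
    seqH.flatMap fun i => seqH.flatMap fun j => seqH.map fun k =>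
      ((peq P u i v j).and (peq P v j w k)).imp (peq P u i w k)

/-- (A2): congruence of `≐` w.r.t. the projections. -/
def axA2 (P : Params) : List Fmd3 :=
  vars3.flatMap fun u => vars3.flatMap fun v =>
    seqH2.flatMap fun i => seqH2.flatMap fun j => [false, true].map fun k =>
      ((peq P u i v j).and (peq P u (i ++ [k]) u (i ++ [k]))).imp
        (peq P u (i ++ [k]) v (j ++ [k]))

/-- (A3): existence of pairs. -/
def axA3 (P : Params) : List Fmd3 :=
  vars3.flatMap fun u => vars3.flatMap fun v =>
    (vars3.filter fun w => decide (w ≠ u ∧ w ≠ v)).flatMap fun w =>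
      seqH.flatMap fun i => seqH.map fun j =>
        ((peq P u i u i).and (peq P v j v j)).imp
          (.ex w ((peq P w [false] u i).and (peq P w [true] v j)))

/-- (A4): `∃w (u ≐ w)`. -/
def axA4 (P : Params) : List Fmd3 :=
  vars3.flatMap fun u => vars3.map fun w => .ex w (eqvF P u w)

/-- The pairing axiom `Ax`. -/
def AxF (P : Params) : Fmd3 := conjF P (axA1 P ++ axA2 P ++ axA3 P ++ axA4 P)

/-- (A5), first half: uniqueness of pairs. -/
def axA5a (P : Params) : Fmd3 :=
  ((peq P .x [false] .y [false]).and (peq P .x [true] .y [true])).imp (eqvF P .x .y)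

/-- (A5), second half: the two projections have the same domain. -/
def axA5b (P : Params) : Fmd3 :=
  (peq P .x [false] .x [false]).iff (peq P .x [true] .x [true])

/-- The strong pairing axiom `SAx`. -/
def SAxF (P : Params) : Fmd3 := (AxF P).and ((axA5a P).and (axA5b P))

/-- `pair := ∃y p0 ∧ ∃y p1`. -/
def pairF (P : Params) : Fmd3 := (Fmd3.ex .y P.p0).and (.ex .y P.p1)

/-- `φu_i := ∃x(x ≐ u_i ∧ φ)` for `u ∈ {y,z}`. -/
def appA (P : Params) (φ : Fmd3) (u : Var) (i : List Bool) : Fmd3 :=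
  .ex .x ((peq P .x [] u i).and φ)

/-- Relation composition `φ ∘ ψ`. -/
def compF (P : Params) (φ ψ : Fmd3) : Fmd3 :=
  .ex .y ((appA P φ .y [false]).and ((appA P ψ .y [true]).and
    ((peq P .x [false] .y [false, false]).and
      ((peq P .y [false, true] .y [true, false]).and (peq P .y [true, true] .x [true])))))

/-- Converse `φ⌣`. -/
def convF (P : Params) (φ : Fmd3) : Fmd3 :=
  .ex .y ((appA P φ .y []).and ((peq P .y [false] .x [true]).and (peq P .y [true] .x [false])))

/-- Identity `Id := x_0 ≐ x_1`. -/
def IdF (P : Params) : Fmd3 := peq P .x [false] .x [true]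

/-- Complement `−φ := pair ∧ ¬φ`. -/
def negF (P : Params) (φ : Fmd3) : Fmd3 := (pairF P).and φ.not

/-- The universe `dra` of the relation algebra reduct. -/
def dra (P : Params) : Set Fmd3 :=
  {φ | ∃ ψ : Fmd3, ψ.OneFree ∧ Prf {AxF P} (φ.iff (compF P ψ (IdF P)))}

/-- The congruence `φ ≡_Ax ψ`. -/
def REqv (P : Params) (φ ψ : Fmd3) : Prop := Prf {AxF P} (φ.iff ψ)

/-- `Triplet := x_{11} ≐ x_{11}`. -/
def TripletF (P : Params) : Fmd3 := peq P .x [true, true] .x [true, true]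

/-- `φx_i := ∃y(y ≐ x_i ∧ φy)` for `φ ∈ Fmd3¹`. -/
def appX (P : Params) (φ : Fmd3) (i : List Bool) : Fmd3 :=
  .ex .y ((peq P .y [] .x i).and (appA P φ .y []))

/-- `(0) := 0`, `(1) := 10`, `(2) := 11`. -/
def dgt (i : Fin 3) : List Bool :=
  if i = 0 then [false] else if i = 1 then [true, false] else [true, true]

/-- The formula `T_i`. -/
def TiF (P : Params) (i : Fin 3) : Fmd3 :=
  (appX P (TripletF P) [false]).and ((appX P (TripletF P) [true]).and
    (conjF P (((List.finRange 3).filter fun j => decide (j ≠ i)).map fun j =>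
      peq P .x (false :: dgt j) .x (true :: dgt j))))

/-- Cylindrification `c_i φ := φ ∘ T_i`. -/
def ciF (P : Params) (i : Fin 3) (φ : Fmd3) : Fmd3 := compF P φ (TiF P i)

/-- Diagonal `d_{ij} := Triplet x_1 ∧ x_{1(i)} ≐ x_{1(j)}`. -/
def dijF (P : Params) (i j : Fin 3) : Fmd3 :=
  (appX P (TripletF P) [true]).and (peq P .x (true :: dgt i) .x (true :: dgt j))

/-- Complement in `Dca`: `−φ := Triplet x_1 ∧ ¬φ`. -/
def negC (P : Params) (φ : Fmd3) : Fmd3 := (appX P (TripletF P) [true]).and φ.not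

/-- The universe `dca` of the cylindric reduct. -/
def dca (P : Params) : Set Fmd3 :=
  {φ | ∃ ψ : Fmd3, ψ.OneFree ∧
    Prf {SAxF P} (φ.iff ((appX P ψ [true]).and (appX P (TripletF P) [true])))}

/-- The congruence `φ ≡_SAx ψ`. -/
def CEqv (P : Params) (φ ψ : Fmd3) : Prop := Prf {SAxF P} (φ.iff ψ)

/-!
The proof is semantic. `⊢d3` is sound and complete for Kripke frames with three pairwise
commuting equivalence relations, one per variable (canonical model argument), so it suffices to
argue in an arbitrary such frame validating `Ax`. There, for an `x`-local `θ`, a pair `x`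
satisfying `θ` also satisfies `θ ∘ Id` (compose with `(x_1, x_1)`), whereas `θ ∘ Id` only provides
some `x'` with the same projections as `x` that satisfies `θ`, since `Ax` does not make pairs
unique. The formulas that `Id`, `−`, `∘` and `⌣` produce from normal forms hold only at pairs and
depend only on the projections of `x`, so for them `θ ∘ Id ↔ θ`; for `+` it suffices that `∘`
distributes over `∨`.
-/

namespace Ld3

def TT : Fmd3 := .or .P (.not .P)

def FF : Fmd3 := .not TT

section Tautologies

variable (a b c : Fmd3)

lemma taut_imp_self : (a.imp a).Taut := by
  intro v hor hnot; simp only [Fmd3.imp, hor, hnot]; cases v a <;> rfl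

lemma taut_TT : TT.Taut := by
  intro v hor hnot; simp only [TT, hor, hnot]; cases v .P <;> rfl

lemma taut_imp_TT : (a.imp TT).Taut := by
  intro v hor hnot; simp only [Fmd3.imp, TT, hor, hnot]; cases v a <;> cases v .P <;> rfl

lemma taut_imp_trans : ((a.imp b).imp ((b.imp c).imp (a.imp c))).Taut := by
  intro v hor hnot; simp only [Fmd3.imp, hor, hnot]
  cases v a <;> cases v b <;> cases v c <;> rfl

lemma taut_imp_mp : ((a.imp b).imp ((a.imp (b.imp c)).imp (a.imp c))).Taut := by
  intro v hor hnot; simp only [Fmd3.imp, hor, hnot]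
  cases v a <;> cases v b <;> cases v c <;> rfl

lemma taut_imp_and : ((c.imp a).imp ((c.imp b).imp (c.imp (a.and b)))).Taut := by
  intro v hor hnot; simp only [Fmd3.imp, Fmd3.and, hor, hnot]
  cases v a <;> cases v b <;> cases v c <;> rfl

lemma taut_and_left : ((a.and b).imp a).Taut := by
  intro v hor hnot; simp only [Fmd3.imp, Fmd3.and, hor, hnot]; cases v a <;> cases v b <;> rfl

lemma taut_and_right : ((a.and b).imp b).Taut := by
  intro v hor hnot; simp only [Fmd3.imp, Fmd3.and, hor, hnot]; cases v a <;> cases v b <;> rfl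

lemma taut_and_intro : (a.imp (b.imp (a.and b))).Taut := by
  intro v hor hnot; simp only [Fmd3.imp, Fmd3.and, hor, hnot]; cases v a <;> cases v b <;> rfl

lemma taut_curry : (((a.and b).imp c).imp (b.imp (a.imp c))).Taut := by
  intro v hor hnot; simp only [Fmd3.imp, Fmd3.and, hor, hnot]
  cases v a <;> cases v b <;> cases v c <;> rfl

lemma taut_contrapose : ((a.imp b).imp (b.not.imp a.not)).Taut := by
  intro v hor hnot; simp only [Fmd3.imp, hor, hnot]; cases v a <;> cases v b <;> rfl

lemma taut_not_not_imp : (a.not.not.imp a).Taut := by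
  intro v hor hnot; simp only [Fmd3.imp, hor, hnot]; cases v a <;> rfl

lemma taut_imp_not_not : (a.imp a.not.not).Taut := by
  intro v hor hnot; simp only [Fmd3.imp, hor, hnot]; cases v a <;> rfl

lemma taut_not_and_imp_or : ((a.and b).not.imp (a.not.or b.not)).Taut := by
  intro v hor hnot; simp only [Fmd3.imp, Fmd3.and, hor, hnot]; cases v a <;> cases v b <;> rfl

lemma taut_imp_imp_self : (a.imp (b.imp a)).Taut := by
  intro v hor hnot; simp only [Fmd3.imp, hor, hnot]; cases v a <;> cases v b <;> rfl

lemma taut_or_inl : (a.imp (a.or b)).Taut := by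
  intro v hor hnot; simp only [Fmd3.imp, hor, hnot]; cases v a <;> cases v b <;> rfl

lemma taut_or_inr : (b.imp (a.or b)).Taut := by
  intro v hor hnot; simp only [Fmd3.imp, hor, hnot]; cases v a <;> cases v b <;> rfl

lemma taut_not_or : (a.not.imp (b.not.imp (a.or b).not)).Taut := by
  intro v hor hnot; simp only [Fmd3.imp, hor, hnot]; cases v a <;> cases v b <;> rfl

lemma taut_imp_not_imp_FF : (a.imp (a.not.imp FF)).Taut := by
  intro v hor hnot; simp only [Fmd3.imp, FF, TT, hor, hnot]; cases v .P <;> cases v a <;> rfl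

lemma taut_imp_FF_imp_not : ((a.imp FF).imp a.not).Taut := by
  intro v hor hnot; simp only [Fmd3.imp, FF, TT, hor, hnot]; cases v .P <;> cases v a <;> rfl

lemma taut_not_imp_FF_imp : ((a.not.imp FF).imp a).Taut := by
  intro v hor hnot; simp only [Fmd3.imp, FF, TT, hor, hnot]; cases v a <;> cases v .P <;> rfl

lemma taut_and_imp_FF : (((a.and b).imp FF).imp (a.imp b.not)).Taut := by
  intro v hor hnot; simp only [Fmd3.and, Fmd3.imp, FF, TT, hor, hnot]
  cases v a <;> cases v b <;> cases v .P <;> rfl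

end Tautologies

end Ld3

namespace Prf

open Ld3

variable {T : Set Fmd3} {a b c : Fmd3}

lemma imp_trans (h1 : Prf T (a.imp b)) (h2 : Prf T (b.imp c)) : Prf T (a.imp c) :=
  ((taut (taut_imp_trans a b c)).mp h1).mp h2

lemma imp_mp (h1 : Prf T (a.imp b)) (h2 : Prf T (a.imp (b.imp c))) : Prf T (a.imp c) :=
  ((taut (taut_imp_mp a b c)).mp h1).mp h2

lemma imp_and (h1 : Prf T (c.imp a)) (h2 : Prf T (c.imp b)) : Prf T (c.imp (a.and b)) :=
  ((taut (taut_imp_and a b c)).mp h1).mp h2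

lemma ex_mono (v : Var) (h : Prf T (a.imp b)) : Prf T ((Fmd3.ex v a).imp (.ex v b)) :=
  (ax2 v a b).mp (h.gen v)

lemma all_mono (v : Var) (h : Prf T (a.imp b)) : Prf T ((Fmd3.all v a).imp (.all v b)) :=
  (taut (taut_contrapose _ _)).mp (ex_mono v ((taut (taut_contrapose a b)).mp h))

lemma not_ex_imp_all_not (v : Var) (a : Fmd3) :
    Prf T ((Fmd3.ex v a).not.imp (Fmd3.all v a.not)) :=
  (taut (taut_contrapose _ _)).mp (ex_mono v (taut (taut_not_not_imp a)))

lemma all_and_imp_all (v : Var) (a b : Fmd3) :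
    Prf T (((Fmd3.all v a).and (Fmd3.all v b)).imp (Fmd3.all v (a.and b))) := by
  have hex : Prf T ((Fmd3.ex v (a.and b).not).imp ((Fmd3.ex v a.not).or (Fmd3.ex v b.not))) :=
    (ex_mono v (taut (taut_not_and_imp_or a b))).imp_trans
      ((taut (taut_and_left _ _)).mp (ax5 v a.not b.not))
  refine Prf.imp_trans (taut ?_) ((taut (taut_contrapose _ _)).mp hex)
  intro val hor hnot
  simp only [Fmd3.imp, Fmd3.and, Fmd3.all, hor, hnot]
  cases val (Fmd3.ex v (.not a)) <;> cases val (Fmd3.ex v (.not b)) <;> rfl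

end Prf

namespace Ld3

section Deduction

variable {T : Set Fmd3} {a b c : Fmd3}

def conjList : List Fmd3 → Fmd3
  | [] => TT
  | a :: l => a.and (conjList l)

lemma prf_conjList_imp {L : List Fmd3} (h : a ∈ L) : Prf T ((conjList L).imp a) := by
  induction L with
  | nil => cases h
  | cons b l ih =>
    rcases List.mem_cons.1 h with rfl | h
    · exact Prf.taut (taut_and_left _ _)
    · exact (Prf.taut (taut_and_right b (conjList l))).imp_trans (ih h)

lemma prf_imp_conjList {L : List Fmd3} (h : ∀ ψ ∈ L, Prf T (c.imp ψ)) :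
    Prf T (c.imp (conjList L)) := by
  induction L with
  | nil => exact Prf.taut (taut_imp_TT c)
  | cons b l ih => exact Prf.imp_and (h b (by simp)) (ih fun ψ hψ => h ψ (by simp [hψ]))

lemma prf_conjList_imp_conjList {L L' : List Fmd3} (h : ∀ ψ ∈ L, ψ ∈ L') :
    Prf T ((conjList L').imp (conjList L)) :=
  prf_imp_conjList fun ψ hψ => prf_conjList_imp (h ψ hψ)

def Ded (T Γ : Set Fmd3) (φ : Fmd3) : Prop :=
  ∃ L : List Fmd3, (∀ ψ ∈ L, ψ ∈ Γ) ∧ Prf T ((conjList L).imp φ)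

variable {Γ : Set Fmd3}

lemma Ded.of_prf (h : Prf T a) : Ded T Γ a :=
  ⟨[], by simp, (Prf.taut (taut_imp_imp_self a (conjList []))).mp h⟩

lemma Ded.of_mem (h : a ∈ Γ) : Ded T Γ a :=
  ⟨[a], by simpa, prf_conjList_imp (by simp)⟩

lemma Ded.mp (h1 : Ded T Γ (a.imp b)) (h2 : Ded T Γ a) : Ded T Γ b := by
  obtain ⟨L1, hL1, hp1⟩ := h1
  obtain ⟨L2, hL2, hp2⟩ := h2
  refine ⟨L1 ++ L2, fun ψ hψ => (List.mem_append.1 hψ).elim (hL1 ψ) (hL2 ψ), ?_⟩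
  exact ((prf_conjList_imp_conjList (by simp +contextual)).imp_trans hp2).imp_mp
    ((prf_conjList_imp_conjList (by simp +contextual)).imp_trans hp1)

lemma Ded.deduction (h : Ded T (insert a Γ) b) : Ded T Γ (a.imp b) := by
  classical
  obtain ⟨L, hL, hp⟩ := h
  refine ⟨L.filter (· ≠ a), fun ψ hψ => ?_, ?_⟩
  · have h1 := List.mem_filter.1 hψ
    exact (hL ψ h1.1).resolve_left (by simpa using h1.2)
  have hsplit : Prf T ((a.and (conjList (L.filter (· ≠ a)))).imp (conjList L)) := by
    refine prf_imp_conjList fun ψ hψ => ?_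
    by_cases hc : ψ = a
    · subst hc; exact Prf.taut (taut_and_left _ _)
    · exact (Prf.taut (taut_and_right a _)).imp_trans
        (prf_conjList_imp (List.mem_filter.2 ⟨hψ, by simpa using hc⟩))
  exact (Prf.taut (taut_curry a _ b)).mp (hsplit.imp_trans hp)

lemma prf_imp_of_ded_singleton (h : Ded T {a} b) : Prf T (a.imp b) := by
  obtain ⟨L, hL, hp⟩ := (Set.singleton_def a ▸ h : Ded T (insert a ∅) b).deduction
  obtain rfl : L = [] := List.eq_nil_iff_forall_not_mem.2 fun ψ hψ => hL ψ hψ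
  exact hp.mp (Prf.taut taut_TT)

def Consistent (T Γ : Set Fmd3) : Prop := ¬ Ded T Γ FF

def MaxConsistent (T Γ : Set Fmd3) : Prop :=
  Consistent T Γ ∧ ∀ φ, φ ∉ Γ → ¬ Consistent T (insert φ Γ)

namespace MaxConsistent

variable (hm : MaxConsistent T Γ)
include hm

lemma mem_of_ded (h : Ded T Γ a) : a ∈ Γ := by
  by_contra hmem
  exact hm.2 a hmem fun hded => hm.1 (hded.deduction.mp h)

lemma mem_of_prf (h : Prf T a) : a ∈ Γ :=
  hm.mem_of_ded (Ded.of_prf h)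

lemma mem_of_prf_imp (hab : Prf T (a.imp b)) (ha : a ∈ Γ) : b ∈ Γ :=
  hm.mem_of_ded ((Ded.of_prf hab).mp (.of_mem ha))

lemma not_mem_iff : a.not ∈ Γ ↔ a ∉ Γ := by
  constructor
  · intro h1 h2
    exact hm.1 (((Ded.of_prf (Prf.taut (taut_imp_not_imp_FF a))).mp (.of_mem h2)).mp (.of_mem h1))
  · intro h1
    have h3 : Ded T (insert a Γ) FF := by_contra (hm.2 a h1)
    exact hm.mem_of_ded ((Ded.of_prf (Prf.taut (taut_imp_FF_imp_not a))).mp h3.deduction)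

lemma or_mem_iff : a.or b ∈ Γ ↔ a ∈ Γ ∨ b ∈ Γ := by
  constructor
  · intro h
    by_contra hc
    rw [not_or] at hc
    have : Ded T Γ (a.or b).not := ((Ded.of_prf (Prf.taut (taut_not_or a b))).mp
      (.of_mem ((hm.not_mem_iff).2 hc.1))).mp (.of_mem ((hm.not_mem_iff).2 hc.2))
    exact (hm.not_mem_iff.1 (hm.mem_of_ded this)) h
  · rintro (h | h)
    · exact hm.mem_of_prf_imp (Prf.taut (taut_or_inl a b)) h
    · exact hm.mem_of_prf_imp (Prf.taut (taut_or_inr a b)) h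

lemma conjList_mem {L : List Fmd3} (h : ∀ ψ ∈ L, ψ ∈ Γ) : conjList L ∈ Γ :=
  hm.mem_of_ded ⟨L, h, Prf.taut (taut_imp_self _)⟩

lemma all_conjList_mem {v : Var} {L : List Fmd3} (h : ∀ ψ ∈ L, Fmd3.all v ψ ∈ Γ) :
    Fmd3.all v (conjList L) ∈ Γ := by
  induction L with
  | nil => exact hm.mem_of_prf ((Prf.taut taut_TT).gen v)
  | cons a l ih =>
    refine hm.mem_of_prf_imp (Prf.all_and_imp_all v _ _) ?_
    exact hm.mem_of_ded (((Ded.of_prf (Prf.taut (taut_and_intro _ _))).mp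
      (.of_mem (h a (by simp)))).mp (.of_mem (ih fun ψ hψ => h ψ (by simp [hψ]))))

end MaxConsistent

lemma exists_maxConsistent_superset (h : Consistent T Γ) :
    ∃ Δ, Γ ⊆ Δ ∧ MaxConsistent T Δ := by
  have hchains : ∀ c ⊆ {Δ | Consistent T Δ}, IsChain (· ⊆ ·) c → c.Nonempty →
      ∃ ub ∈ {Δ | Consistent T Δ}, ∀ s ∈ c, s ⊆ ub := by
    intro c hc hchain hne
    refine ⟨⋃₀ c, ?_, fun s hs => Set.subset_sUnion_of_mem hs⟩
    rintro ⟨L, hL, hp⟩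
    obtain ⟨Δ, hΔc, hLΔ⟩ := hchain.directedOn.exists_mem_subset_of_finset_subset_biUnion hne
      (s := L.toFinset) (fun ψ hψ => by simpa using hL ψ (List.mem_toFinset.1 hψ))
    exact hc hΔc ⟨L, fun ψ hψ => hLΔ (List.mem_toFinset.2 hψ), hp⟩
  obtain ⟨Δ, hsub, hmax⟩ := zorn_subset_nonempty {Δ | Consistent T Δ} hchains Γ h
  exact ⟨Δ, hsub, hmax.prop, fun φ hφ hcon => hφ (hmax.mem_of_prop_insert hcon)⟩

end Deduction

structure KModel where
  W : Type
  E : Var → W → W → Prop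
  V : W → Prop
  refl : ∀ v w, E v w w
  symm : ∀ v {a b}, E v a b → E v b a
  trans : ∀ v {a b c}, E v a b → E v b c → E v a c
  comm : ∀ v u {a b c}, E v a b → E u b c → ∃ d, E u a d ∧ E v d c

def KTr (M : KModel) : Fmd3 → M.W → Prop
  | .P, w => M.V w
  | .or a b, w => KTr M a w ∨ KTr M b w
  | .not a, w => ¬ KTr M a w
  | .ex v a, w => ∃ w', M.E v w w' ∧ KTr M a w'

section Semantics

variable {M : KModel} {a b : Fmd3} {v : Var} {w : M.W}

@[simp] lemma KTr_or : KTr M (a.or b) w ↔ (KTr M a w ∨ KTr M b w) := Iff.rfl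

@[simp] lemma KTr_not : KTr M a.not w ↔ ¬ KTr M a w := Iff.rfl

@[simp] lemma KTr_ex : KTr M (.ex v a) w ↔ ∃ w', M.E v w w' ∧ KTr M a w' := Iff.rfl

@[simp] lemma KTr_and : KTr M (a.and b) w ↔ (KTr M a w ∧ KTr M b w) := by
  simp only [Fmd3.and, KTr_not, KTr_or]; tauto

@[simp] lemma KTr_imp : KTr M (a.imp b) w ↔ (KTr M a w → KTr M b w) := by
  simp only [Fmd3.imp, KTr_not, KTr_or]; tauto

@[simp] lemma KTr_iff : KTr M (a.iff b) w ↔ (KTr M a w ↔ KTr M b w) := by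
  simp only [Fmd3.iff, KTr_and, KTr_imp]; tauto

@[simp] lemma KTr_all : KTr M (.all v a) w ↔ ∀ w', M.E v w w' → KTr M a w' := by
  simp [Fmd3.all]

lemma KTr_of_taut (h : a.Taut) : KTr M a w := by
  classical
  simpa using h (fun ψ => decide (KTr M ψ w)) (fun _ _ => by simp [Bool.decide_or])
    (fun _ => by simp)

theorem KTr_of_prf {T : Set Fmd3} (h : Prf T a) (hT : ∀ ψ ∈ T, ∀ w, KTr M ψ w) (w : M.W) :
    KTr M a w := by
  induction h generalizing w with
  | hyp h => exact hT _ h w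
  | taut h => exact KTr_of_taut h
  | ax2 v φ ψ =>
    simp only [KTr_imp, KTr_all, KTr_ex]
    rintro h ⟨w', hw', hφ⟩
    exact ⟨w', hw', h w' hw' hφ⟩
  | ax3 v φ => exact KTr_imp.2 fun h => ⟨w, M.refl v w, h⟩
  | ax4 v φ =>
    simp only [KTr_imp, KTr_ex]
    rintro ⟨w1, h1, w2, h2, hφ⟩
    exact ⟨w2, M.trans v h1 h2, hφ⟩
  | ax5 v φ ψ =>
    simp only [KTr_iff, KTr_or, KTr_ex, and_or_left, exists_or]
  | ax6 v φ =>
    simp only [KTr_imp, KTr_not, KTr_ex]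
    rintro ⟨w', hw', hn⟩ ⟨w2, hw2, hφ⟩
    exact hn ⟨w2, M.trans v (M.symm v hw') hw2, hφ⟩
  | ax7 v u φ =>
    simp only [KTr_imp, KTr_ex]
    rintro ⟨w1, h1, w2, h2, hφ⟩
    obtain ⟨d, hd1, hd2⟩ := M.comm v u h1 h2
    exact ⟨d, hd1, w2, hd2, hφ⟩
  | mp _ _ ih1 ih2 => exact KTr_imp.1 (ih1 w) (ih2 w)
  | gen v _ ih => exact KTr_all.2 fun w' _ => ih w'

end Semantics

section Canonical

variable {T : Set Fmd3}

variable (T) in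
def CanW := {Γ : Set Fmd3 // MaxConsistent T Γ}

def CanE (v : Var) (Γ Δ : CanW T) : Prop := ∀ φ, φ ∈ Δ.1 → Fmd3.ex v φ ∈ Γ.1

lemma canE_of_all_mem {v : Var} {Γ : CanW T} {Δ : Set Fmd3} (hΔ : MaxConsistent T Δ)
    (h : ∀ ψ, Fmd3.all v ψ ∈ Γ.1 → ψ ∈ Δ) : CanE v Γ ⟨Δ, hΔ⟩ := by
  intro ψ hψ
  by_contra hc
  have h1 : Fmd3.all v ψ.not ∈ Γ.1 :=
    Γ.2.mem_of_prf_imp (Prf.not_ex_imp_all_not v ψ) (Γ.2.not_mem_iff.2 hc)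
  exact hΔ.not_mem_iff.1 (h _ h1) hψ

lemma consistent_insert_of_ex_mem {v : Var} {φ : Fmd3} (Γ : CanW T)
    (h : Fmd3.ex v φ ∈ Γ.1) : Consistent T (insert φ {ψ | Fmd3.all v ψ ∈ Γ.1}) := by
  intro hded
  obtain ⟨L, hL, hp⟩ := (Ded.of_prf (Prf.taut (taut_imp_FF_imp_not φ))).mp hded.deduction
  have hall : Fmd3.all v φ.not ∈ Γ.1 :=
    Γ.2.mem_of_prf_imp (Prf.all_mono v hp) (Γ.2.all_conjList_mem hL)
  exact Γ.2.not_mem_iff.1 hall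
    (Γ.2.mem_of_prf_imp (Prf.ex_mono v (Prf.taut (taut_imp_not_not φ))) h)

lemma exists_canE_of_ex_mem (Γ : CanW T) {v : Var} {φ : Fmd3} (h : Fmd3.ex v φ ∈ Γ.1) :
    ∃ Δ : CanW T, CanE v Γ Δ ∧ φ ∈ Δ.1 := by
  obtain ⟨Δ, hsub, hmcs⟩ := exists_maxConsistent_superset (consistent_insert_of_ex_mem Γ h)
  exact ⟨⟨Δ, hmcs⟩, canE_of_all_mem hmcs fun ψ hψ => hsub (Or.inr hψ), hsub (.inl rfl)⟩

lemma canE_refl (v : Var) (Γ : CanW T) : CanE v Γ Γ :=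
  fun φ hφ => Γ.2.mem_of_prf_imp (Prf.ax3 v φ) hφ

lemma canE_symm (v : Var) {Γ Δ : CanW T} (h : CanE v Γ Δ) : CanE v Δ Γ := by
  intro φ hφ
  by_contra hc
  have h1 : (Fmd3.ex v φ).not ∈ Γ.1 :=
    Γ.2.mem_of_prf_imp (Prf.ax6 v φ) (h _ (Δ.2.not_mem_iff.2 hc))
  exact Γ.2.not_mem_iff.1 h1 (Γ.2.mem_of_prf_imp (Prf.ax3 v φ) hφ)

lemma canE_trans (v : Var) {Γ Δ Θ : CanW T} (h1 : CanE v Γ Δ) (h2 : CanE v Δ Θ) :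
    CanE v Γ Θ :=
  fun φ hφ => Γ.2.mem_of_prf_imp (Prf.ax4 v φ) (h1 _ (h2 _ hφ))

lemma exists_sublist_of_forall_or {L : List Fmd3} {A : Fmd3 → Prop} {Θ : Set Fmd3} {v : Var}
    (hex : ∀ ψ ∈ L, A ψ ∨ ∃ χ ∈ Θ, ψ = Fmd3.ex v χ) :
    ∃ Lc : List Fmd3, (∀ χ ∈ Lc, χ ∈ Θ) ∧ ∀ ψ ∈ L, A ψ ∨ ∃ χ ∈ Lc, ψ = Fmd3.ex v χ := by
  induction L with
  | nil => exact ⟨[], by simp, by simp⟩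
  | cons a l ih =>
    obtain ⟨Lc, hLcΘ, hLc⟩ := ih fun ψ hψ => hex ψ (by simp [hψ])
    rcases hex a (by simp) with h | ⟨χ, hχ, rfl⟩
    · exact ⟨Lc, hLcΘ, by simpa [h] using hLc⟩
    · refine ⟨χ :: Lc, by simpa [hχ] using hLcΘ, ?_⟩
      simp only [List.mem_cons, forall_eq_or_imp, exists_eq_or_imp, true_or, or_true, true_and]
      exact fun ψ hψ => (hLc ψ hψ).imp_right fun ⟨χ', h', e⟩ => .inr ⟨χ', h', e⟩

/-- Finitely many `∃v χ` with `χ ∈ Θ` follow from `∃v χc` for the conjunction `χc ∈ Θ` of the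
`χ`s, and `∃u ∃v χc ∈ Γ` by axiom ((7)). -/
lemma consistent_comm {v u : Var} {Γ Δ Θ : CanW T} (h1 : CanE v Γ Δ) (h2 : CanE u Δ Θ) :
    Consistent T ({ψ | Fmd3.all u ψ ∈ Γ.1} ∪ {χ' | ∃ χ ∈ Θ.1, χ' = Fmd3.ex v χ}) := by
  classical
  rintro ⟨L, hL, hp⟩
  set La := L.filter (fun ψ => Fmd3.all u ψ ∈ Γ.1)
  obtain ⟨Lc, hLcΘ, hLc⟩ := exists_sublist_of_forall_or hL
  have hχΘ : conjList Lc ∈ Θ.1 := Θ.2.conjList_mem hLcΘ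
  have hexuv : Fmd3.ex u (Fmd3.ex v (conjList Lc)) ∈ Γ.1 :=
    Γ.2.mem_of_prf_imp (Prf.ax7 v u _) (h1 _ (h2 _ hχΘ))
  have hLaLc : Prf T (((conjList La).and (Fmd3.ex v (conjList Lc))).imp FF) := by
    refine Prf.imp_trans (prf_imp_conjList fun ψ hψ => ?_) hp
    by_cases hmem : Fmd3.all u ψ ∈ Γ.1
    · exact (Prf.taut (taut_and_left _ _)).imp_trans
        (prf_conjList_imp (List.mem_filter.2 ⟨hψ, by simpa using hmem⟩))
    · obtain ⟨χ', hχ', rfl⟩ := (hLc ψ hψ).resolve_left hmem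
      exact (Prf.taut (taut_and_right _ _)).imp_trans (Prf.ex_mono v (prf_conjList_imp hχ'))
  have hall : Fmd3.all u (conjList La) ∈ Γ.1 :=
    Γ.2.all_conjList_mem fun ψ hψ => by simpa using (List.mem_filter.1 hψ).2
  have hnot : Fmd3.all u (Fmd3.ex v (conjList Lc)).not ∈ Γ.1 :=
    Γ.2.mem_of_prf_imp (Prf.all_mono u ((Prf.taut (taut_and_imp_FF _ _)).mp hLaLc)) hall
  exact Γ.2.not_mem_iff.1 hnot
    (Γ.2.mem_of_prf_imp (Prf.ex_mono u (Prf.taut (taut_imp_not_not _))) hexuv)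

lemma canE_comm (v u : Var) {Γ Δ Θ : CanW T} (h1 : CanE v Γ Δ) (h2 : CanE u Δ Θ) :
    ∃ Λ : CanW T, CanE u Γ Λ ∧ CanE v Λ Θ := by
  obtain ⟨Λ, hsub, hmcs⟩ := exists_maxConsistent_superset (consistent_comm h1 h2)
  exact ⟨⟨Λ, hmcs⟩, canE_of_all_mem hmcs fun ψ hψ => hsub (Or.inl hψ),
    fun χ hχ => hsub (Or.inr ⟨χ, hχ, rfl⟩)⟩

variable (T) in
def canonicalModel : KModel where
  W := CanW T
  E := CanE
  V := fun Γ => Fmd3.P ∈ Γ.1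
  refl := canE_refl
  symm v _ _ := canE_symm v
  trans v _ _ _ := canE_trans v
  comm v u _ _ _ := canE_comm v u

lemma KTr_canonicalModel_iff (φ : Fmd3) (Γ : CanW T) :
    KTr (canonicalModel T) φ Γ ↔ φ ∈ Γ.1 := by
  induction φ generalizing Γ with
  | P => exact Iff.rfl
  | or a b iha ihb => exact KTr_or.trans (by rw [iha, ihb, Γ.2.or_mem_iff])
  | not a iha => exact KTr_not.trans (by rw [iha, ← Γ.2.not_mem_iff])
  | ex v a ih =>
    refine ⟨fun ⟨Δ, hE, hTr⟩ => hE a ((ih Δ).1 hTr), fun h => ?_⟩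
    obtain ⟨Δ, hE, hmem⟩ := exists_canE_of_ex_mem Γ h
    exact ⟨Δ, hE, (ih Δ).2 hmem⟩

theorem prf_of_forall_KTr {φ : Fmd3}
    (h : ∀ M : KModel, (∀ ψ ∈ T, ∀ w, KTr M ψ w) → ∀ w, KTr M φ w) : Prf T φ := by
  by_contra hn
  have hcon : Consistent T {φ.not} := fun hded =>
    hn ((Prf.taut (taut_not_imp_FF_imp φ)).mp (prf_imp_of_ded_singleton hded))
  obtain ⟨Γ, hsub, hmcs⟩ := exists_maxConsistent_superset hcon
  have hT : ∀ ψ ∈ T, ∀ Δ : CanW T, KTr (canonicalModel T) ψ Δ := fun ψ hψ Δ =>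
    (KTr_canonicalModel_iff ψ Δ).2 (Δ.2.mem_of_prf (Prf.hyp hψ))
  exact hmcs.not_mem_iff.1 (hsub rfl)
    ((KTr_canonicalModel_iff φ ⟨Γ, hmcs⟩).1 (h (canonicalModel T) hT ⟨Γ, hmcs⟩))

end Canonical

section FreeVars

@[simp] lemma freeVars_or {a b : Fmd3} : (a.or b).freeVars = a.freeVars ∪ b.freeVars := rfl

@[simp] lemma freeVars_not {a : Fmd3} : a.not.freeVars = a.freeVars := rfl

@[simp] lemma freeVars_ex {v : Var} {a : Fmd3} : (Fmd3.ex v a).freeVars = a.freeVars.erase v :=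
  rfl

@[simp] lemma freeVars_and {a b : Fmd3} : (a.and b).freeVars = a.freeVars ∪ b.freeVars := by
  simp [Fmd3.and]

variable {M : KModel}

lemma KTr_iff_of_E {v : Var} {φ : Fmd3} (h : v ∉ φ.freeVars) {w w' : M.W} (he : M.E v w w') :
    KTr M φ w ↔ KTr M φ w' := by
  induction φ generalizing w w' with
  | P => cases v <;> simp [Fmd3.freeVars] at h
  | or a b iha ihb =>
    simp only [freeVars_or, Finset.mem_union, not_or] at h
    rw [KTr_or, KTr_or, iha h.1 he, ihb h.2 he]
  | not a iha => rw [KTr_not, KTr_not, iha h he]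
  | ex u a iha =>
    simp only [KTr_ex]
    by_cases hv : v = u
    · subst hv
      exact ⟨fun ⟨w1, h1, ha⟩ => ⟨w1, M.trans v (M.symm v he) h1, ha⟩,
        fun ⟨w1, h1, ha⟩ => ⟨w1, M.trans v he h1, ha⟩⟩
    · have hva : v ∉ a.freeVars := fun hc => h (by simp [hv, hc])
      constructor
      · rintro ⟨w1, h1, ha⟩
        obtain ⟨d, hd1, hd2⟩ := M.comm v u (M.symm v he) h1
        exact ⟨d, hd1, (iha hva hd2).2 ha⟩
      · rintro ⟨w1, h1, ha⟩
        obtain ⟨d, hd1, hd2⟩ := M.comm v u he h1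
        exact ⟨d, hd1, (iha hva hd2).2 ha⟩

lemma KTr.move {v : Var} {φ : Fmd3} {w w' : M.W} (h : KTr M φ w) (he : M.E v w w')
    (hv : v ∉ φ.freeVars) : KTr M φ w' :=
  (KTr_iff_of_E hv he).1 h

lemma KTr.move_back {v : Var} {φ : Fmd3} {w w' : M.W} (h : KTr M φ w') (he : M.E v w w')
    (hv : v ∉ φ.freeVars) : KTr M φ w :=
  (KTr_iff_of_E hv he).2 h

lemma _root_.Fmd3.OneFree.not_mem {φ : Fmd3} (hφ : φ.OneFree) {v : Var} (hv : v ≠ .x := by decide) :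
    v ∉ φ.freeVars :=
  fun h => hv (by simpa using hφ h)

lemma erase_union_subset {s1 s2 : Finset Var} {t u v : Var}
    (h1 : s1 ⊆ {u, t}) (h2 : s2 ⊆ {v, t}) : (s1 ∪ s2).erase t ⊆ {u, v} := by
  intro a ha
  simp only [Finset.mem_erase, Finset.mem_union] at ha
  have := ha.2.imp (@h1 a) (@h2 a)
  simp only [Finset.mem_insert, Finset.mem_singleton] at this ⊢
  tauto

variable {P : Params}

lemma eqvF_comm (P : Params) (u v : Var) : eqvF P u v = eqvF P v u := by
  cases u <;> cases v <;> rfl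

lemma eqvF_self (P : Params) (u : Var) : eqvF P u u = trueF P := by cases u <;> rfl

lemma third_ne {u v : Var} (h : u ≠ v) : third u v ≠ u ∧ third u v ≠ v := by
  cases u <;> cases v <;> simp_all [third]

lemma third_comm (u v : Var) : third u v = third v u := by
  cases u <;> cases v <;> rfl

lemma freeVars_eqvF_subset (hP : GoodParams P) {u v : Var} (h : u ≠ v) :
    (eqvF P u v).freeVars ⊆ {u, v} := by
  cases u <;> cases v <;> simp_all [eqvF, hP.1, hP.2.1] <;> decide

lemma freeVars_pform_subset (hP : GoodParams P) (k : Bool) {u v : Var} (h : u ≠ v) :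
    (pform P k u v).freeVars ⊆ {u, v} := by
  have hk : (if k then P.p1 else P.p0).freeVars = {Var.x, Var.y} := by
    cases k <;> simp [hP.2.2.1, hP.2.2.2]
  cases u <;> cases v <;>
    simp_all [pform, subst2, sXZ, sYZ, sYX, sZX, sZY, eqvF, hP.1, hP.2.1] <;>
    intro a ha <;> simp_all <;> tauto

lemma freeVars_peqDrev_subset (hP : GoodParams P) {u : Var} (l : List Bool) {v : Var}
    (h : u ≠ v) : (peqDrev P u v l).freeVars ⊆ {u, v} := by
  induction l generalizing v with
  | nil => exact freeVars_eqvF_subset hP h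
  | cons k rest ih =>
    cases rest with
    | nil => exact freeVars_pform_subset hP k h
    | cons k2 r2 =>
      refine erase_union_subset (ih (third_ne h).1.symm) fun a ha => ?_
      have := freeVars_pform_subset hP k (third_ne h).2 ha
      simp only [Finset.mem_insert, Finset.mem_singleton] at this ⊢
      tauto

lemma freeVars_peqD2_subset (hP : GoodParams P) {u v : Var} (h : u ≠ v) (i j : List Bool) :
    (peqD2 P u v i j).freeVars ⊆ {u, v} := by
  cases j with
  | nil => exact freeVars_peqDrev_subset hP i.reverse h
  | cons k j' =>
    exact erase_union_subset (freeVars_peqDrev_subset hP i.reverse (third_ne h).1.symm)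
      (freeVars_peqDrev_subset hP (k :: j').reverse (third_ne h).2.symm)

lemma peq_nil_nil (u v : Var) : peq P u [] v [] = eqvF P u v := by simp [peq]

lemma peq_of_ne {u v : Var} (h : u ≠ v) {i j : List Bool} (hij : ¬(i = [] ∧ j = [])) :
    peq P u i v j = peqD2 P u v i j := by
  simp [peq, hij, h]

lemma peq_x_x {i j : List Bool} (hij : ¬(i = [] ∧ j = [])) :
    peq P .x i .x j = .ex .y ((eqvF P .x .y).and (peqD2 P .x .y i j)) := by
  simp [peq, hij]

lemma peq_y_y {i j : List Bool} (hij : ¬(i = [] ∧ j = [])) :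
    peq P .y i .y j = .ex .x ((eqvF P .x .y).and (peqD2 P .x .y i j)) := by
  simp [peq, hij]

lemma peq_z_z {i j : List Bool} (hij : ¬(i = [] ∧ j = [])) :
    peq P .z i .z j = .ex .x ((peqDrev P .z .x i.reverse).and (peqDrev P .z .x j.reverse)) := by
  simp [peq, hij]

lemma peqDrev_reverse {u v : Var} (h : u ≠ v) (i : List Bool) :
    peqDrev P u v i.reverse = peq P u i v [] := by
  by_cases hi : i = []
  · subst hi; exact (peq_nil_nil u v).symm
  · rw [peq_of_ne h (by simp [hi])]; rfl

lemma pform_eq_peq {u v : Var} (h : u ≠ v) (k : Bool) : pform P k u v = peq P u [k] v [] :=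
  peqDrev_reverse h [k]

lemma freeVars_peq_subset (hP : GoodParams P) (u v : Var) (i j : List Bool)
    (h : ¬(u = v ∧ i = [] ∧ j = [])) : (peq P u i v j).freeVars ⊆ {u, v} := by
  by_cases huv : u = v
  · subst huv
    have hij : ¬(i = [] ∧ j = []) := fun hc => h ⟨rfl, hc⟩
    have hxy := freeVars_eqvF_subset hP (P := P) (u := .x) (v := .y) (by decide)
    have hD := freeVars_peqD2_subset hP (P := P) (u := .x) (v := .y) (by decide) i j
    intro a ha
    cases u
    · rw [peq_x_x hij] at ha
      simpa using erase_union_subset hxy hD ha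
    · rw [peq_y_y hij] at ha
      have := erase_union_subset (u := Var.y) (v := Var.y) (t := .x)
        (fun b hb => by have := hxy hb; simp at this ⊢; tauto)
        (fun b hb => by have := hD hb; simp at this ⊢; tauto) ha
      simpa using this
    · rw [peq_z_z hij] at ha
      simpa using erase_union_subset (freeVars_peqDrev_subset hP i.reverse (by decide))
        (freeVars_peqDrev_subset hP j.reverse (by decide)) ha
  · by_cases hij : i = [] ∧ j = []
    · obtain ⟨rfl, rfl⟩ := hij
      rw [peq_nil_nil]; exact freeVars_eqvF_subset hP huv
    · rw [peq_of_ne huv hij]; exact freeVars_peqD2_subset hP huv i j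

end FreeVars

class IsAxModel (P : Params) (M : KModel) : Prop where
  goodParams : GoodParams P
  ax : ∀ w, KTr M (AxF P) w

/-- `u_i ≐ u_i` says that the projection `u_i` exists. -/
def SimEq (P : Params) (M : KModel) (u : Var) (i : List Bool) (v : Var) (j : List Bool)
    (w : M.W) : Prop :=
  KTr M (peq P u i v j) w

section SimEq

variable {P : Params} {M : KModel} {u v t : Var} {i j k : List Bool} {w w' : M.W}

lemma KTr_trueF : KTr M (trueF P) w := em _

lemma KTr_conjF {L : List Fmd3} : KTr M (conjF P L) w ↔ ∀ θ ∈ L, KTr M θ w := by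
  induction L with
  | nil => simp [conjF, KTr_trueF]
  | cons a l ih =>
    cases l with
    | nil => simp [conjF]
    | cons b l2 =>
      show KTr M (a.and (conjF P (b :: l2))) w ↔ _
      rw [KTr_and, ih]
      simp

lemma simEq_nil_nil_iff : SimEq P M u [] v [] w ↔ KTr M (eqvF P u v) w := by
  rw [SimEq, peq_nil_nil]

lemma SimEq.refl_nil : SimEq P M u [] u [] w := by
  rw [SimEq, peq_nil_nil, eqvF_self]; exact KTr_trueF

lemma SimEq.symm_nil (h : SimEq P M u [] v [] w) : SimEq P M v [] u [] w := by
  rwa [simEq_nil_nil_iff, eqvF_comm, ← simEq_nil_nil_iff]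

variable [IsAxModel P M]

lemma simEq_iff_of_E (he : M.E t w w') (htu : t ≠ u := by decide) (htv : t ≠ v := by decide) :
    SimEq P M u i v j w ↔ SimEq P M u i v j w' := by
  by_cases hd : u = v ∧ i = [] ∧ j = []
  · obtain ⟨rfl, rfl, rfl⟩ := hd
    exact iff_of_true SimEq.refl_nil SimEq.refl_nil
  · refine KTr_iff_of_E (fun hc => ?_) he
    have := freeVars_peq_subset (IsAxModel.goodParams M) u v i j hd hc
    simp only [Finset.mem_insert, Finset.mem_singleton] at this
    tauto

lemma SimEq.move (h : SimEq P M u i v j w) (he : M.E t w w') (htu : t ≠ u := by decide)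
    (htv : t ≠ v := by decide) : SimEq P M u i v j w' :=
  (simEq_iff_of_E he htu htv).1 h

lemma SimEq.move_back (h : SimEq P M u i v j w') (he : M.E t w w')
    (htu : t ≠ u := by decide) (htv : t ≠ v := by decide) : SimEq P M u i v j w :=
  (simEq_iff_of_E he htu htv).2 h

end SimEq

section AxInstances

variable {P : Params} {M : KModel} [IsAxModel P M] {u v t : Var} {i j k : List Bool} {w : M.W}

lemma mem_vars3 (u : Var) : u ∈ vars3 := by cases u <;> decide

lemma mem_seqH {l : List Bool} (h : l.length ≤ 3) : l ∈ seqH := by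
  rcases l with _ | ⟨a, _ | ⟨b, _ | ⟨c, _ | ⟨d, t⟩⟩⟩⟩
  · decide
  · cases a <;> decide
  · cases a <;> cases b <;> decide
  · cases a <;> cases b <;> cases c <;> decide
  · simp at h; omega

lemma mem_seqH2 {l : List Bool} (h : l.length ≤ 2) : l ∈ seqH2 := by
  rcases l with _ | ⟨a, _ | ⟨b, _ | ⟨c, t⟩⟩⟩
  · decide
  · cases a <;> decide
  · cases a <;> cases b <;> decide
  · simp at h

lemma KTr_of_mem_AxF {θ : Fmd3} (h : θ ∈ axA1 P ∨ θ ∈ axA2 P ∨ θ ∈ axA3 P ∨ θ ∈ axA4 P) :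
    KTr M θ w :=
  KTr_conjF.1 (IsAxModel.ax w) θ (by simp only [List.mem_append]; tauto)

lemma SimEq.trans (h1 : SimEq P M u i v j w) (h2 : SimEq P M v j t k w)
    (hi : i.length ≤ 3 := by (try simp) <;> omega) (hj : j.length ≤ 3 := by (try simp) <;> omega)
    (hk : k.length ≤ 3 := by (try simp) <;> omega) : SimEq P M u i t k w := by
  have hm : ((peq P u i v j).and (peq P v j t k)).imp (peq P u i t k) ∈ axA1 P := by
    simp only [axA1, List.mem_flatMap, List.mem_map]
    exact ⟨u, mem_vars3 u, v, mem_vars3 v, t, mem_vars3 t, i, mem_seqH hi, j, mem_seqH hj,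
      k, mem_seqH hk, rfl⟩
  exact KTr_imp.1 (KTr_of_mem_AxF (.inl hm)) (KTr_and.2 ⟨h1, h2⟩)

lemma SimEq.append_singleton {b : Bool} (h1 : SimEq P M u i v j w)
    (h2 : SimEq P M u (i ++ [b]) u (i ++ [b]) w)
    (hi : i.length ≤ 2 := by (try simp) <;> omega) (hj : j.length ≤ 2 := by (try simp) <;> omega) :
    SimEq P M u (i ++ [b]) v (j ++ [b]) w := by
  have hm : ((peq P u i v j).and (peq P u (i ++ [b]) u (i ++ [b]))).imp
      (peq P u (i ++ [b]) v (j ++ [b])) ∈ axA2 P := by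
    simp only [axA2, List.mem_flatMap, List.mem_map]
    exact ⟨u, mem_vars3 u, v, mem_vars3 v, i, mem_seqH2 hi, j, mem_seqH2 hj,
      b, by cases b <;> simp, rfl⟩
  exact KTr_imp.1 (KTr_of_mem_AxF (.inr (.inl hm))) (KTr_and.2 ⟨h1, h2⟩)

lemma exists_pair (h1 : SimEq P M u i u i w) (h2 : SimEq P M v j v j w)
    (htu : t ≠ u := by decide) (htv : t ≠ v := by decide)
    (hi : i.length ≤ 3 := by (try simp) <;> omega) (hj : j.length ≤ 3 := by (try simp) <;> omega) :
    ∃ w', M.E t w w' ∧ SimEq P M t [false] u i w' ∧ SimEq P M t [true] v j w' := by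
  have hm : ((peq P u i u i).and (peq P v j v j)).imp
      (.ex t ((peq P t [false] u i).and (peq P t [true] v j))) ∈ axA3 P := by
    simp only [axA3, List.mem_flatMap, List.mem_map, List.mem_filter]
    exact ⟨u, mem_vars3 u, v, mem_vars3 v, t, ⟨mem_vars3 t, by simp [htu, htv]⟩,
      i, mem_seqH hi, j, mem_seqH hj, rfl⟩
  obtain ⟨w', hw', hq⟩ := KTr_imp.1 (KTr_of_mem_AxF (.inr (.inr (.inl hm)))) (KTr_and.2 ⟨h1, h2⟩)
  exact ⟨w', hw', (KTr_and.1 hq).1, (KTr_and.1 hq).2⟩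

lemma exists_copy (u t : Var) (w : M.W) : ∃ w', M.E t w w' ∧ SimEq P M u [] t [] w' := by
  have hm : Fmd3.ex t (eqvF P u t) ∈ axA4 P := by
    simp only [axA4, List.mem_flatMap, List.mem_map]
    exact ⟨u, mem_vars3 u, t, mem_vars3 t, rfl⟩
  obtain ⟨w', hw', he⟩ := KTr_of_mem_AxF (w := w) (.inr (.inr (.inr hm)))
  exact ⟨w', hw', simEq_nil_nil_iff.2 he⟩

end AxInstances

section Unfolding

variable {P : Params} {M : KModel} {u v : Var} {i j : List Bool} {w : M.W}

lemma simEq_iff_exists_third (h : u ≠ v) (hj : j ≠ []) :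
    SimEq P M u i v j w ↔ ∃ w', M.E (third u v) w w' ∧
      SimEq P M u i (third u v) [] w' ∧ SimEq P M v j (third u v) [] w' := by
  obtain ⟨k, j', rfl⟩ := List.exists_cons_of_ne_nil hj
  rw [SimEq, peq_of_ne h (by simp)]
  show KTr M (.ex (third u v) ((peqDrev P u (third u v) i.reverse).and
    (peqDrev P v (third u v) (k :: j').reverse))) w ↔ _
  rw [peqDrev_reverse (third_ne h).1.symm i, peqDrev_reverse (third_ne h).2.symm (k :: j')]
  simp only [KTr_ex, KTr_and]
  rfl

lemma simEq_append_singleton_nil_iff (h : u ≠ v) (hi : i ≠ []) (k : Bool) :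
    SimEq P M u (i ++ [k]) v [] w ↔ ∃ w', M.E (third u v) w w' ∧
      SimEq P M u i (third u v) [] w' ∧ SimEq P M (third u v) [k] v [] w' := by
  obtain ⟨a, t, ht⟩ := List.exists_cons_of_ne_nil (List.reverse_ne_nil_iff.2 hi)
  rw [SimEq, peq_of_ne h (by simp)]
  show KTr M (peqDrev P u v (i ++ [k]).reverse) w ↔ _
  rw [List.reverse_append, List.reverse_singleton, List.singleton_append, ht]
  show KTr M (.ex (third u v) ((peqDrev P u (third u v) (a :: t)).and
    (pform P k (third u v) v))) w ↔ _
  rw [← ht, peqDrev_reverse (third_ne h).1.symm i, pform_eq_peq (third_ne h).2 k]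
  simp only [KTr_ex, KTr_and]
  rfl

lemma simEq_x_x_iff (hij : ¬(i = [] ∧ j = [])) :
    SimEq P M .x i .x j w ↔ ∃ w', M.E .y w w' ∧
      SimEq P M .x [] .y [] w' ∧ SimEq P M .x i .y j w' := by
  unfold SimEq
  rw [peq_x_x hij, peq_nil_nil, peq_of_ne (by decide) hij]
  simp only [KTr_ex, KTr_and]

lemma simEq_y_y_iff (hij : ¬(i = [] ∧ j = [])) :
    SimEq P M .y i .y j w ↔ ∃ w', M.E .x w w' ∧
      SimEq P M .x [] .y [] w' ∧ SimEq P M .x i .y j w' := by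
  unfold SimEq
  rw [peq_y_y hij, peq_nil_nil, peq_of_ne (by decide) hij]
  simp only [KTr_ex, KTr_and]

lemma simEq_z_z_iff (hij : ¬(i = [] ∧ j = [])) :
    SimEq P M .z i .z j w ↔ ∃ w', M.E .x w w' ∧
      SimEq P M .z i .x [] w' ∧ SimEq P M .z j .x [] w' := by
  rw [SimEq, peq_z_z hij, peqDrev_reverse (by decide) i, peqDrev_reverse (by decide) j]
  simp only [KTr_ex, KTr_and]
  rfl

lemma simEq_y_singleton_z_iff (k : Bool) : SimEq P M .y [k] .z [] w ↔
    ∃ w', M.E .x w w' ∧ SimEq P M .x [] .y [] w' ∧ SimEq P M .x [k] .z [] w' := by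
  rw [SimEq, ← pform_eq_peq (by decide) k]
  show KTr M (.ex .x ((eqvF P .x .y).and (sXZ P (if k then P.p1 else P.p0)))) w ↔ _
  rw [show sXZ P (if k then P.p1 else P.p0) = peq P .x [k] .z [] from
    pform_eq_peq (u := .x) (v := .z) (by decide) k, ← peq_nil_nil (P := P) .x .y]
  simp only [KTr_ex, KTr_and]
  rfl

lemma SimEq.symm (hq : SimEq P M u i v j w) (h : u ≠ v := by decide) (hi : i ≠ [] := by simp)
    (hj : j ≠ [] := by simp) : SimEq P M v j u i w := by
  obtain ⟨w', he, h1, h2⟩ := (simEq_iff_exists_third h hj).1 hq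
  rw [simEq_iff_exists_third h.symm hi, third_comm]
  exact ⟨w', he, h2, h1⟩

end Unfolding

section Derived

variable {P : Params} {M : KModel} [IsAxModel P M] {u v t : Var} {i j : List Bool} {w : M.W}

lemma SimEq.symm_of_right_nil (hq : SimEq P M u i v [] w) (h : u ≠ v := by decide)
    (hi : i ≠ [] := by simp) (hlen : i.length ≤ 3 := by (try simp) <;> omega) :
    SimEq P M v [] u i w := by
  obtain ⟨w', he, hQ⟩ := exists_copy (P := P) v (third u v) w
  rw [simEq_iff_exists_third h.symm hi, third_comm]
  exact ⟨w', he, hQ, (hq.move he (third_ne h).1 (third_ne h).2).trans hQ⟩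

lemma SimEq.symm_of_left_nil (hq : SimEq P M v [] u i w) (h : u ≠ v := by decide)
    (hi : i ≠ [] := by simp) (hlen : i.length ≤ 3 := by (try simp) <;> omega) :
    SimEq P M u i v [] w := by
  rw [simEq_iff_exists_third h.symm hi, third_comm] at hq
  obtain ⟨w', he, h1, h2⟩ := hq
  exact (h2.trans h1.symm_nil).move_back he (third_ne h).1 (third_ne h).2

lemma SimEq.exists_retarget (hq : SimEq P M u i v [] w) (ht : t ≠ u)
    (hlen : i.length ≤ 3 := by (try simp) <;> omega) :
    ∃ w', M.E t w w' ∧ SimEq P M u i t [] w' := by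
  by_cases htv : t = v
  · subst htv
    exact ⟨w, M.refl t w, hq⟩
  · obtain ⟨w', he, hQ⟩ := exists_copy (P := P) v t w
    exact ⟨w', he, (hq.move he ht htv).trans hQ⟩

lemma SimEq.exists_copy_of_self (hD : SimEq P M u i u i w) (ht : t ≠ u) (hi : i ≠ [])
    (hlen : i.length ≤ 3 := by (try simp) <;> omega) :
    ∃ w', M.E t w w' ∧ SimEq P M u i t [] w' := by
  have hii : ¬(i = [] ∧ i = []) := by simp [hi]
  obtain ⟨s, hsu, w1, he1, h1⟩ : ∃ s, s ≠ u ∧ ∃ w1, M.E s w w1 ∧ SimEq P M u i s [] w1 := by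
    cases u with
    | x =>
      obtain ⟨w1, he1, -, h2⟩ := (simEq_x_x_iff hii).1 hD
      obtain ⟨w2, he2, h3, -⟩ := (simEq_iff_exists_third (by decide) hi).1 h2
      obtain ⟨d, hd1, hd2⟩ := M.comm .y .z he1 he2
      exact ⟨.z, by decide, d, hd1, h3.move_back hd2⟩
    | y =>
      obtain ⟨w1, he1, -, h2⟩ := (simEq_y_y_iff hii).1 hD
      obtain ⟨w2, he2, -, h3⟩ := (simEq_iff_exists_third (by decide) hi).1 h2
      obtain ⟨d, hd1, hd2⟩ := M.comm .x .z he1 he2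
      exact ⟨.z, by decide, d, hd1, h3.move_back hd2⟩
    | z =>
      obtain ⟨w1, he1, h1, -⟩ := (simEq_z_z_iff hii).1 hD
      exact ⟨.x, by decide, w1, he1, h1⟩
  obtain ⟨w2, he2, h2⟩ := h1.exists_retarget ht
  by_cases hts : t = s
  · subst hts
    exact ⟨w2, M.trans t he1 he2, h2⟩
  · obtain ⟨d, hd1, hd2⟩ := M.comm s t he1 he2
    exact ⟨d, hd1, h2.move_back hd2 hsu (Ne.symm hts)⟩

lemma SimEq.z_self_of_nil (hq : SimEq P M .z i v [] w) (hi : i ≠ [])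
    (hlen : i.length ≤ 3 := by (try simp) <;> omega) : SimEq P M .z i .z i w := by
  obtain ⟨w', he, h1⟩ := hq.exists_retarget (t := .x) (by decide)
  exact ((simEq_z_z_iff (by simp [hi])).2 ⟨w', M.refl _ _, h1, h1⟩).move_back he

lemma SimEq.self_of_singleton_nil {k : Bool} (hq : SimEq P M u [k] v [] w) :
    SimEq P M u [k] u [k] w := by
  cases u with
  | z => exact hq.z_self_of_nil (by simp)
  | x =>
    obtain ⟨w1, he1, h1⟩ := hq.exists_retarget (t := .z) (by decide)
    obtain ⟨w2, he2, h2⟩ := exists_copy (P := P) .x .y w1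
    have h3 : SimEq P M .y [k] .z [] w2 :=
      (simEq_y_singleton_z_iff k).2 ⟨w2, M.refl _ _, h2, h1.move he2⟩
    have h4 : SimEq P M .x [k] .y [k] w2 :=
      (simEq_iff_exists_third (by decide) (by simp)).2 ⟨w2, M.refl _ _, h1.move he2, h3⟩
    exact ((simEq_x_x_iff (by simp)).2 ⟨w2, he2, h2, h4⟩).move_back he1
  | y =>
    obtain ⟨w1, he1, h1⟩ := hq.exists_retarget (t := .z) (by decide)
    obtain ⟨w2, he2, h2, h3⟩ := (simEq_y_singleton_z_iff k).1 h1
    have h4 : SimEq P M .x [k] .y [k] w2 :=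
      (simEq_iff_exists_third (by decide) (by simp)).2 ⟨w2, M.refl _ _, h3, h1.move he2⟩
    exact ((simEq_y_y_iff (by simp)).2 ⟨w2, he2, h2, h4⟩).move_back he1

lemma SimEq.self_of_singleton {k : Bool} (hq : SimEq P M u [k] v j w) (h : u ≠ v := by decide) :
    SimEq P M u [k] u [k] w := by
  by_cases hj : j = []
  · subst hj
    exact hq.self_of_singleton_nil
  · obtain ⟨w', he, h1, -⟩ := (simEq_iff_exists_third h hj).1 hq
    exact h1.self_of_singleton_nil.move_back he (third_ne h).1 (third_ne h).1

lemma SimEq.singleton_of_nil {k : Bool} (h1 : SimEq P M u [] v j w)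
    (h2 : SimEq P M u [k] u [k] w) (hj : j.length ≤ 2 := by (try simp) <;> omega) :
    SimEq P M u [k] v (j ++ [k]) w :=
  SimEq.append_singleton (i := []) h1 h2 (hj := hj)

lemma SimEq.transport_self_singleton {k : Bool} (h1 : SimEq P M u [] v [] w)
    (h2 : SimEq P M u [k] u [k] w) (h : u ≠ v := by decide) : SimEq P M v [k] v [k] w :=
  ((h1.singleton_of_nil h2 : SimEq P M u [k] v [k] w).symm h).self_of_singleton h.symm

lemma SimEq.self_of_self_append {k1 k2 : Bool} (hD : SimEq P M u [k1, k2] u [k1, k2] w) :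
    SimEq P M u [k1] u [k1] w := by
  obtain ⟨t, htu⟩ : ∃ t : Var, t ≠ u := by
    cases u
    exacts [⟨.y, by decide⟩, ⟨.x, by decide⟩, ⟨.x, by decide⟩]
  obtain ⟨w1, he1, h1⟩ := hD.exists_copy_of_self htu (by simp)
  obtain ⟨w2, he2, h2, -⟩ :=
    (simEq_append_singleton_nil_iff htu.symm (i := [k1]) (by simp) k2).1 h1
  exact (h2.self_of_singleton_nil.move_back he2 (third_ne htu.symm).1
    (third_ne htu.symm).1).move_back he1 htu htu

lemma SimEq.self_of_pair_nil_y {k1 k2 : Bool} (hq : SimEq P M .y [k1, k2] v [] w) :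
    SimEq P M .y [k1, k2] .y [k1, k2] w := by
  obtain ⟨w0, he0, R0⟩ := hq.exists_retarget (t := .x) (by decide)
  obtain ⟨w1, he1, C1, C2⟩ := (simEq_append_singleton_nil_iff (u := .y) (v := .x) (i := [k1])
    (by decide) (by simp) k2).1 R0
  have E1 : SimEq P M .z [] .y [k1] w1 := C1.symm_of_right_nil
  have Dz2 := C2.self_of_singleton_nil
  have E3 : SimEq P M .z [k2] .y [k1, k2] w1 := E1.singleton_of_nil Dz2
  obtain ⟨w2, he2, G⟩ := exists_copy (P := P) .y .x w1
  have S : SimEq P M .y [k1] .x [k1] w2 := G.singleton_of_nil (C1.self_of_singleton_nil.move he2)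
  have E4 : SimEq P M .z [k2] .x [k1, k2] w2 :=
    ((E1.move he2).trans S).singleton_of_nil (Dz2.move he2)
  have b7 : SimEq P M .x [k1, k2] .y [k1, k2] w2 := E4.symm.trans (E3.move he2)
  exact (((simEq_y_y_iff (by simp)).2 ⟨w2, he2, G.symm_nil, b7⟩).move_back he1).move_back he0

lemma SimEq.self_of_pair_nil_x {k1 k2 : Bool} (hq : SimEq P M .x [k1, k2] v [] w) :
    SimEq P M .x [k1, k2] .x [k1, k2] w := by
  obtain ⟨w0, he0, R0⟩ := hq.exists_retarget (t := .z) (by decide)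
  obtain ⟨w1, he1, C1, C2⟩ := (simEq_append_singleton_nil_iff (u := .x) (v := .z) (i := [k1])
    (by decide) (by simp) k2).1 R0
  obtain ⟨w1', he1', H⟩ := exists_copy (P := P) .y .z w1
  have E1 : SimEq P M .z [] .x [k1] w1' := ((C1.move he1').trans H).symm_of_right_nil
  have Dz2 : SimEq P M .z [k2] .z [k2] w1' :=
    H.transport_self_singleton (C2.self_of_singleton_nil.move he1')
  have E4 : SimEq P M .z [k2] .x [k1, k2] w1' := E1.singleton_of_nil Dz2
  obtain ⟨w2, he2, G⟩ := exists_copy (P := P) .x .y w1'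
  have S : SimEq P M .x [k1] .y [k1] w2 :=
    G.singleton_of_nil ((C1.self_of_singleton_nil.move he1').move he2)
  have E5 : SimEq P M .z [k2] .y [k1, k2] w2 :=
    ((E1.move he2).trans S).singleton_of_nil (Dz2.move he2)
  have b7 : SimEq P M .x [k1, k2] .y [k1, k2] w2 := (E4.move he2).symm.trans E5
  exact ((((simEq_x_x_iff (by simp)).2 ⟨w2, he2, G, b7⟩).move_back he1').move_back
    he1).move_back he0

lemma SimEq.self_of_nil (hq : SimEq P M u i v [] w) (hi : i ≠ []) (hil : i.length ≤ 2) :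
    SimEq P M u i u i w := by
  match i, hi, hil with
  | [k], _, _ => exact hq.self_of_singleton_nil
  | [k1, k2], _, _ =>
    cases u with
    | x => exact hq.self_of_pair_nil_x
    | y => exact hq.self_of_pair_nil_y
    | z => exact hq.z_self_of_nil (by simp)

lemma SimEq.self_left_of_ne (hq : SimEq P M u i v j w) (h : u ≠ v) (hi : i ≠ [])
    (hil : i.length ≤ 2) : SimEq P M u i u i w := by
  by_cases hj : j = []
  · subst hj
    exact hq.self_of_nil hi hil
  · obtain ⟨w', he, h1, -⟩ := (simEq_iff_exists_third h hj).1 hq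
    exact (h1.self_of_nil hi hil).move_back he (third_ne h).1 (third_ne h).1

lemma SimEq.self_right_of_ne (hq : SimEq P M u i v j w) (h : u ≠ v) (hj : j ≠ [])
    (hjl : j.length ≤ 2) : SimEq P M v j v j w := by
  by_cases hi : i = []
  · subst hi
    exact (hq.symm_of_left_nil h.symm hj).self_left_of_ne h.symm hj hjl
  · exact (hq.symm h hi hj).self_left_of_ne h.symm hj hjl

lemma SimEq.transport_self (h1 : SimEq P M u [] v [] w) (h2 : SimEq P M u i u i w) (h : u ≠ v)
    (hi : i ≠ []) (hil : i.length ≤ 2) : SimEq P M v i v i w := by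
  match i, hi, hil with
  | [k], _, _ => exact h1.transport_self_singleton h2 h
  | [k1, k2], _, _ =>
    have S : SimEq P M u [k1] v [k1] w := h1.singleton_of_nil h2.self_of_self_append
    exact (S.append_singleton h2 : SimEq P M u [k1, k2] v [k1, k2] w).self_right_of_ne h
      (by simp) (by simp)

lemma SimEq.self_left (hq : SimEq P M u i v j w) (hi : i ≠ [] := by simp)
    (hil : i.length ≤ 2 := by (try simp) <;> omega) : SimEq P M u i u i w := by
  by_cases huv : u ≠ v
  · exact hq.self_left_of_ne huv hi hil
  obtain rfl := not_not.1 huv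
  have hij : ¬(i = [] ∧ j = []) := by simp [hi]
  cases u with
  | x =>
    obtain ⟨w', he, -, h2⟩ := (simEq_x_x_iff hij).1 hq
    exact (h2.self_left_of_ne (by decide) hi hil).move_back he
  | y =>
    obtain ⟨w', he, hxy, h2⟩ := (simEq_y_y_iff hij).1 hq
    exact (hxy.transport_self (h2.self_left_of_ne (by decide) hi hil) (by decide) hi
      hil).move_back he
  | z =>
    obtain ⟨w', he, h1, -⟩ := (simEq_z_z_iff hij).1 hq
    exact (h1.self_left_of_ne (by decide) hi hil).move_back he

lemma SimEq.self_right (hq : SimEq P M u i v j w) (hj : j ≠ [] := by simp)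
    (hjl : j.length ≤ 2 := by (try simp) <;> omega) : SimEq P M v j v j w := by
  by_cases huv : u ≠ v
  · exact hq.self_right_of_ne huv hj hjl
  obtain rfl := not_not.1 huv
  have hij : ¬(i = [] ∧ j = []) := by simp [hj]
  cases u with
  | x =>
    obtain ⟨w', he, hxy, h2⟩ := (simEq_x_x_iff hij).1 hq
    exact (hxy.symm_nil.transport_self (h2.self_right_of_ne (by decide) hj hjl) (by decide)
      hj hjl).move_back he
  | y =>
    obtain ⟨w', he, -, h2⟩ := (simEq_y_y_iff hij).1 hq
    exact (h2.self_right_of_ne (by decide) hj hjl).move_back he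
  | z =>
    obtain ⟨w', he, -, h1⟩ := (simEq_z_z_iff hij).1 hq
    exact (h1.self_left_of_ne (by decide) hj hjl).move_back he

end Derived

section Operations

variable {P : Params} {M : KModel} {α β : Fmd3} {u : Var} {i : List Bool} {w : M.W}

lemma KTr_appA : KTr M (appA P α u i) w ↔
    ∃ w', M.E .x w w' ∧ SimEq P M .x [] u i w' ∧ KTr M α w' := by
  simp only [appA, KTr_ex, KTr_and, SimEq]

lemma KTr_compF : KTr M (compF P α β) w ↔ ∃ w1, M.E .y w w1 ∧
    KTr M (appA P α .y [false]) w1 ∧ KTr M (appA P β .y [true]) w1 ∧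
    SimEq P M .x [false] .y [false, false] w1 ∧
    SimEq P M .y [false, true] .y [true, false] w1 ∧
    SimEq P M .y [true, true] .x [true] w1 := by
  simp only [compF, KTr_ex, KTr_and, SimEq]

lemma KTr_convF : KTr M (convF P α) w ↔ ∃ w1, M.E .y w w1 ∧ KTr M (appA P α .y []) w1 ∧
    SimEq P M .y [false] .x [true] w1 ∧ SimEq P M .y [true] .x [false] w1 := by
  simp only [convF, KTr_ex, KTr_and, SimEq]

lemma KTr_pairF : KTr M (pairF P) w ↔
    (∃ w', M.E .y w w' ∧ SimEq P M .x [false] .y [] w') ∧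
    (∃ w', M.E .y w w' ∧ SimEq P M .x [true] .y [] w') := by
  have h0 : P.p0 = peq P .x [false] .y [] := pform_eq_peq (u := .x) (v := .y) (by decide) false
  have h1 : P.p1 = peq P .x [true] .y [] := pform_eq_peq (u := .x) (v := .y) (by decide) true
  simp only [pairF, KTr_and, KTr_ex, SimEq, h0, h1]

lemma KTr_appA_or : KTr M (appA P (α.or β) u i) w ↔
    KTr M (appA P α u i) w ∨ KTr M (appA P β u i) w := by
  simp only [KTr_appA, KTr_or, and_or_left, exists_or]

lemma KTr_compF_or {γ : Fmd3} : KTr M (compF P (α.or β) γ) w ↔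
    KTr M (compF P α γ) w ∨ KTr M (compF P β γ) w := by
  simp only [KTr_compF, KTr_appA_or, or_and_right, and_or_left, exists_or]

lemma KTr_appA_congr {α' : Fmd3} (h : ∀ w, KTr M α w ↔ KTr M α' w) :
    KTr M (appA P α u i) w ↔ KTr M (appA P α' u i) w := by
  simp only [KTr_appA, h]

lemma KTr_compF_congr {α' β' : Fmd3} (hα : ∀ w, KTr M α w ↔ KTr M α' w)
    (hβ : ∀ w, KTr M β w ↔ KTr M β' w) : KTr M (compF P α β) w ↔ KTr M (compF P α' β') w := by
  simp only [KTr_compF, KTr_appA_congr hα, KTr_appA_congr hβ]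

lemma KTr_convF_congr {α' : Fmd3} (h : ∀ w, KTr M α w ↔ KTr M α' w) :
    KTr M (convF P α) w ↔ KTr M (convF P α') w := by
  simp only [KTr_convF, KTr_appA_congr h]

lemma erase_y_subset {s : Finset Var} (h : s ⊆ {Var.x, Var.y}) : s.erase .y ⊆ {Var.x} := by
  intro a ha
  have := h (Finset.mem_of_mem_erase ha)
  simp_all

variable (hP : GoodParams P)
include hP

lemma freeVars_appA_y_subset (hα : α.OneFree) (i : List Bool) :
    (appA P α .y i).freeVars ⊆ {Var.y} := by
  intro a ha
  simp only [appA, freeVars_ex, freeVars_and, Finset.mem_erase, Finset.mem_union] at ha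
  obtain ⟨hne, h | h⟩ := ha
  · have := freeVars_peq_subset hP .x .y [] i (by simp) h
    simp_all
  · exact absurd (by simpa using hα h) hne

lemma not_mem_freeVars_appA_y (hα : α.OneFree) {v : Var} (hv : v ≠ .y := by decide) :
    v ∉ (appA P α .y i).freeVars :=
  fun h => hv (by simpa using freeVars_appA_y_subset hP hα i h)

lemma oneFree_compF (hα : α.OneFree) (hβ : β.OneFree) : (compF P α β).OneFree := by
  refine erase_y_subset ?_
  simp only [freeVars_and, Finset.union_subset_iff]
  refine ⟨?_, ?_, ?_, ?_, ?_⟩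
  · exact (freeVars_appA_y_subset hP hα _).trans (by simp)
  · exact (freeVars_appA_y_subset hP hβ _).trans (by simp)
  · exact freeVars_peq_subset hP .x .y _ _ (by simp)
  · exact (freeVars_peq_subset hP .y .y _ _ (by simp)).trans (by simp)
  · exact (freeVars_peq_subset hP .y .x _ _ (by simp)).trans (by simp [Finset.pair_comm])

lemma oneFree_convF (hα : α.OneFree) : (convF P α).OneFree := by
  refine erase_y_subset ?_
  simp only [freeVars_and, Finset.union_subset_iff]
  refine ⟨?_, ?_, ?_⟩
  · exact (freeVars_appA_y_subset hP hα _).trans (by simp)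
  · exact (freeVars_peq_subset hP .y .x _ _ (by simp)).trans (by simp [Finset.pair_comm])
  · exact (freeVars_peq_subset hP .y .x _ _ (by simp)).trans (by simp [Finset.pair_comm])

lemma oneFree_IdF : (IdF P).OneFree :=
  fun a ha => by simpa using freeVars_peq_subset hP .x .x [false] [true] (by simp) ha

lemma oneFree_pairF_and_not (hα : α.OneFree) : ((pairF P).and α.not).OneFree := by
  simp only [Fmd3.OneFree, pairF, freeVars_and, freeVars_ex, freeVars_not, hP.2.2.1, hP.2.2.2,
    Finset.union_subset_iff]
  exact ⟨⟨by decide, by decide⟩, hα⟩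

end Operations

def IsPairAt (P : Params) (M : KModel) (w : M.W) : Prop :=
  SimEq P M .x [false] .x [false] w ∧ SimEq P M .x [true] .x [true] w

/-- `x` at `w'` has the same projections as `x` at `w`, as witnessed by `z` at an intermediate
world `wz`. -/
def Twin (P : Params) (M : KModel) (w w' : M.W) : Prop :=
  ∃ wz, M.E .z w wz ∧ M.E .x wz w' ∧
    SimEq P M .z [false] .x [false] wz ∧ SimEq P M .z [true] .x [true] wz ∧
    SimEq P M .x [false] .z [false] w' ∧ SimEq P M .x [true] .z [true] w'

section Normalization

variable {P : Params} {M : KModel} [IsAxModel P M] {α β θ : Fmd3} {w : M.W}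

lemma isPairAt_of_KTr_IdF (h : KTr M (IdF P) w) : IsPairAt P M w :=
  ⟨SimEq.self_left (u := .x) (v := .x) h, SimEq.self_right (u := .x) (v := .x) h⟩

lemma isPairAt_of_KTr_pairF (h : KTr M (pairF P) w) : IsPairAt P M w := by
  obtain ⟨⟨w0, he0, h0⟩, ⟨w1, he1, h1⟩⟩ := KTr_pairF.1 h
  exact ⟨h0.self_of_singleton_nil.move_back he0, h1.self_of_singleton_nil.move_back he1⟩

lemma isPairAt_of_KTr_compF (h : KTr M (compF P α β) w) : IsPairAt P M w := by
  obtain ⟨w1, he1, -, -, C1, -, C3⟩ := KTr_compF.1 h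
  exact ⟨C1.self_left.move_back he1, C3.self_right.move_back he1⟩

lemma isPairAt_of_KTr_convF (h : KTr M (convF P α) w) : IsPairAt P M w := by
  obtain ⟨w1, he1, -, K2, K3⟩ := KTr_convF.1 h
  exact ⟨K3.self_right.move_back he1, K2.self_right.move_back he1⟩

lemma simEq_y_one_of_KTr_appA_IdF (hI : KTr M (appA P (IdF P) .y [true]) w)
    (D10 : SimEq P M .y [true, false] .y [true, false] w)
    (D11 : SimEq P M .y [true, true] .y [true, true] w) :
    SimEq P M .y [true, false] .y [true, true] w := by
  obtain ⟨wI, heI, F, ID⟩ := KTr_appA.1 hI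
  have f : SimEq P M .y [true] .x [] wI := F.symm_of_left_nil
  have cd0 : SimEq P M .y [true, false] .x [false] wI :=
    f.append_singleton (i := [true]) (D10.move heI)
  have cd1 : SimEq P M .y [true, true] .x [true] wI :=
    f.append_singleton (i := [true]) (D11.move heI)
  exact ((cd0.trans ID).trans cd1.symm).move_back heI

lemma KTr_appA_IdF_of_simEq (h1 : SimEq P M .y [true] .z [] w)
    (hd : SimEq P M .z [false] .z [true] w) : KTr M (appA P (IdF P) .y [true]) w := by
  obtain ⟨wI, heI, H⟩ := exists_copy (P := P) .z .x w
  have g0 : SimEq P M .z [false] .x [false] wI := H.singleton_of_nil (hd.move heI).self_left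
  have g1 : SimEq P M .z [true] .x [true] wI := H.singleton_of_nil (hd.move heI).self_right
  exact KTr_appA.2 ⟨wI, heI, H.symm_nil.trans (h1.move heI).symm_of_right_nil,
    (g0.symm.trans (hd.move heI)).trans g1⟩

/-- The witness for `∘` is `y := (x, z)` with `z := (x_1, x_1)`. -/
lemma KTr_compF_IdF_of_KTr (hθ : θ.OneFree) (hT : KTr M θ w) (hw : IsPairAt P M w) :
    KTr M (compF P θ (IdF P)) w := by
  obtain ⟨h0, h1⟩ := hw
  obtain ⟨wd, hed, Pd0, Pd1⟩ := exists_pair (t := .z) h1 h1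
  obtain ⟨wp, hep, Pp0, Pp1⟩ := exists_pair (P := P) (w := wd) (t := .y) (u := .x) (v := .z)
    (i := []) (j := []) SimEq.refl_nil SimEq.refl_nil
  have hxy0 : SimEq P M .x [] .y [false] wp := Pp0.symm_of_right_nil
  have hzy1 : SimEq P M .z [] .y [true] wp := Pp1.symm_of_right_nil
  have Dz0 := (Pd0.move hep).self_of_singleton
  have Dz1 := (Pd1.move hep).self_of_singleton
  have C1 : SimEq P M .x [false] .y [false, false] wp :=
    hxy0.singleton_of_nil ((h0.move hed).move hep)
  have C2 : SimEq P M .y [false, true] .y [true, false] wp :=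
    ((hxy0.singleton_of_nil ((h1.move hed).move hep)).symm.trans (Pd0.move hep).symm).trans
      (hzy1.singleton_of_nil Dz0)
  have C3 : SimEq P M .y [true, true] .x [true] wp :=
    (hzy1.singleton_of_nil Dz1).symm.trans (Pd1.move hep)
  have A0 : KTr M (appA P θ .y [false]) wp :=
    KTr_appA.2 ⟨wp, M.refl _ _, hxy0, (hT.move hed hθ.not_mem).move hep hθ.not_mem⟩
  have A1 : KTr M (appA P (IdF P) .y [true]) wp :=
    KTr_appA_IdF_of_simEq Pp1 ((Pd0.trans Pd1.symm).move hep)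
  have hP := IsAxModel.goodParams (P := P) M
  obtain ⟨wH, hH1, hH2⟩ := M.comm .z .y hed hep
  exact KTr_compF.2 ⟨wH, hH1, A0.move_back hH2 (not_mem_freeVars_appA_y hP hθ),
    A1.move_back hH2 (not_mem_freeVars_appA_y hP (oneFree_IdF hP)),
    C1.move_back hH2, C2.move_back hH2, C3.move_back hH2⟩

lemma isPairAt_of_simEq_y_zero (F : SimEq P M .x [] .y [false] w)
    (D00 : SimEq P M .y [false, false] .y [false, false] w)
    (D01 : SimEq P M .y [false, true] .y [false, true] w) : IsPairAt P M w := by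
  have f : SimEq P M .y [false] .x [] w := F.symm_of_left_nil
  have g0 : SimEq P M .y [false, false] .x [false] w := f.append_singleton (i := [false]) D00
  have g1 : SimEq P M .y [false, true] .x [true] w := f.append_singleton (i := [false]) D01
  exact ⟨g0.self_right, g1.self_right⟩

lemma simEq_z_x_of_comp_IdF (J : SimEq P M .z [] .y [false] w)
    (A1 : KTr M (appA P (IdF P) .y [true]) w)
    (C1 : SimEq P M .x [false] .y [false, false] w)
    (C2 : SimEq P M .y [false, true] .y [true, false] w)
    (C3 : SimEq P M .y [true, true] .x [true] w) :
    SimEq P M .z [false] .x [false] w ∧ SimEq P M .z [true] .x [true] w := by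
  have j : SimEq P M .y [false] .z [] w := J.symm_of_left_nil
  have o0 : SimEq P M .y [false, false] .z [false] w :=
    j.append_singleton (i := [false]) C1.self_right
  have o1 : SimEq P M .y [false, true] .z [true] w :=
    j.append_singleton (i := [false]) C2.self_left
  have CD := simEq_y_one_of_KTr_appA_IdF A1 C2.self_right C3.self_left
  exact ⟨o0.symm.trans C1.symm, ((o1.symm.trans C2).trans CD).trans C3⟩

lemma exists_twin_of_KTr_compF_IdF (hθ : θ.OneFree) (h : KTr M (compF P θ (IdF P)) w) :
    ∃ w', Twin P M w w' ∧ KTr M θ w' := by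
  obtain ⟨w1, he1, A0, A1, C1, C2, C3⟩ := KTr_compF.1 h
  obtain ⟨w2, he2, F, Tθ⟩ := KTr_appA.1 A0
  have hpair := isPairAt_of_simEq_y_zero F (C1.self_right.move he2) (C2.self_left.move he2)
  obtain ⟨w3, he3, H⟩ := exists_copy (P := P) .x .z w2
  have X0 : SimEq P M .x [false] .z [false] w3 := H.singleton_of_nil (hpair.1.move he3)
  have X1 : SimEq P M .x [true] .z [true] w3 := H.singleton_of_nil (hpair.2.move he3)
  obtain ⟨wB', hB'1, hB'2⟩ := M.comm .x .z he2 he3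
  obtain ⟨wB, hB1, hB2⟩ := M.comm .y .z he1 hB'1
  obtain ⟨w4, h41, h42⟩ := M.comm .y .x hB2 hB'2
  have hP := IsAxModel.goodParams (P := P) M
  obtain ⟨O0, O1⟩ := simEq_z_x_of_comp_IdF ((H.symm_nil.trans (F.move he3)).move_back hB'2)
    (A1.move hB'1 (not_mem_freeVars_appA_y hP (oneFree_IdF hP))) (C1.move hB'1)
    (C2.move hB'1) (C3.move hB'1)
  exact ⟨w4, ⟨wB, hB1, h41, O0.move_back hB2, O1.move_back hB2, X0.move_back h42,
    X1.move_back h42⟩, (Tθ.move he3 hθ.not_mem).move_back h42 hθ.not_mem⟩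

lemma KTr_compF_IdF_iff (hθ : θ.OneFree) (hpair : ∀ w, KTr M θ w → IsPairAt P M w)
    (hdesc : ∀ w w', Twin P M w w' → KTr M θ w' → KTr M θ w) :
    KTr M (compF P θ (IdF P)) w ↔ KTr M θ w := by
  refine ⟨fun h => ?_, fun h => KTr_compF_IdF_of_KTr hθ h (hpair w h)⟩
  obtain ⟨w', htw, hT⟩ := exists_twin_of_KTr_compF_IdF hθ h
  exact hdesc w w' htw hT

end Normalization

namespace Twin

variable {P : Params} {M : KModel} [IsAxModel P M] {α β : Fmd3} {w w' : M.W}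

lemma isPairAt_left (ht : Twin P M w w') : IsPairAt P M w := by
  obtain ⟨wz, hz, -, O0, O1, -⟩ := ht
  exact ⟨O0.self_right.move_back hz, O1.self_right.move_back hz⟩

lemma KTr_IdF_of_right (ht : Twin P M w w') (h : KTr M (IdF P) w') : KTr M (IdF P) w := by
  obtain ⟨wz, hz, hx, O0, O1, X0, X1⟩ := ht
  have hd : SimEq P M .z [false] .z [true] w' := (X0.symm.trans h).trans X1
  exact ((O0.symm.trans (hd.move_back hx)).trans O1).move_back hz

lemma KTr_pairF_left (ht : Twin P M w w') : KTr M (pairF P) w := by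
  obtain ⟨h0, h1⟩ := ht.isPairAt_left
  exact KTr_pairF.2 ⟨h0.exists_copy_of_self (by decide) (by simp),
    h1.exists_copy_of_self (by decide) (by simp)⟩

lemma KTr_compF_of_right (ht : Twin P M w w') (hα : α.OneFree) (hβ : β.OneFree)
    (h : KTr M (compF P α β) w') : KTr M (compF P α β) w := by
  obtain ⟨wz, hz, hx, O0, O1, X0, X1⟩ := ht
  obtain ⟨wE, heE, A0, A1, C1, C2, C3⟩ := KTr_compF.1 h
  have Z1 : SimEq P M .z [false] .y [false, false] wE := (X0.move heE).symm.trans C1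
  have Z3 : SimEq P M .y [true, true] .z [true] wE := C3.trans (X1.move heE)
  obtain ⟨wF, hF1, hF2⟩ := M.comm .x .y hx heE
  obtain ⟨wG, hG1, hG2⟩ := M.comm .z .y hz hF1
  have hP := IsAxModel.goodParams (P := P) M
  exact KTr_compF.2 ⟨wG, hG1,
    (A0.move_back hF2 (not_mem_freeVars_appA_y hP hα)).move_back hG2
      (not_mem_freeVars_appA_y hP hα),
    (A1.move_back hF2 (not_mem_freeVars_appA_y hP hβ)).move_back hG2
      (not_mem_freeVars_appA_y hP hβ),
    ((O0.move hF1).symm.trans (Z1.move_back hF2)).move_back hG2,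
    (C2.move_back hF2).move_back hG2,
    ((Z3.move_back hF2).trans (O1.move hF1)).move_back hG2⟩

lemma KTr_compF_of_left (ht : Twin P M w w') (hα : α.OneFree) (hβ : β.OneFree)
    (h : KTr M (compF P α β) w) : KTr M (compF P α β) w' := by
  obtain ⟨wz, hz, hx, O0, O1, X0, X1⟩ := ht
  have hP := IsAxModel.goodParams (P := P) M
  have hρ := oneFree_compF hP hα hβ
  obtain ⟨w1, he1, A0, A1, C1, C2, C3⟩ := KTr_compF.1 (h.move hz hρ.not_mem)
  have Z1 : SimEq P M .z [false] .y [false, false] w1 := (O0.move he1).trans C1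
  have Z3 : SimEq P M .y [true, true] .z [true] w1 := C3.trans (O1.move he1).symm
  obtain ⟨wK, hK1, hK2⟩ := M.comm .y .x (M.symm .y he1) hx
  exact KTr_compF.2 ⟨wK, M.symm .y hK2, A0.move hK1 (not_mem_freeVars_appA_y hP hα),
    A1.move hK1 (not_mem_freeVars_appA_y hP hβ), (X0.move_back hK2).trans (Z1.move hK1),
    C2.move hK1, (Z3.move hK1).trans (X1.move_back hK2).symm⟩

lemma KTr_convF_of_right (ht : Twin P M w w') (hα : α.OneFree) (h : KTr M (convF P α) w') :
    KTr M (convF P α) w := by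
  obtain ⟨wz, hz, hx, O0, O1, X0, X1⟩ := ht
  obtain ⟨wE, heE, A, K2, K3⟩ := KTr_convF.1 h
  have J2 : SimEq P M .y [false] .z [true] wE := K2.trans (X1.move heE)
  have J3 : SimEq P M .y [true] .z [false] wE := K3.trans (X0.move heE)
  obtain ⟨wF, hF1, hF2⟩ := M.comm .x .y hx heE
  obtain ⟨wG, hG1, hG2⟩ := M.comm .z .y hz hF1
  have hP := IsAxModel.goodParams (P := P) M
  exact KTr_convF.2 ⟨wG, hG1,
    (A.move_back hF2 (not_mem_freeVars_appA_y hP hα)).move_back hG2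
      (not_mem_freeVars_appA_y hP hα),
    ((J2.move_back hF2).trans (O1.move hF1)).move_back hG2,
    ((J3.move_back hF2).trans (O0.move hF1)).move_back hG2⟩

end Twin

section Dra

variable {P : Params} {φ ψ : Fmd3}

lemma exists_KTr_iff_of_mem_dra (h : φ ∈ dra P) : ∃ α : Fmd3, α.OneFree ∧
    ∀ (M : KModel) [IsAxModel P M] (w : M.W), KTr M φ w ↔ KTr M (compF P α (IdF P)) w := by
  obtain ⟨α, hα, hprf⟩ := h
  refine ⟨α, hα, fun M _ w => KTr_iff.1 (KTr_of_prf hprf ?_ w)⟩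
  rintro _ rfl
  exact IsAxModel.ax

lemma mem_dra_of_forall_KTr_iff (hP : GoodParams P) {θ : Fmd3} (hθ : θ.OneFree)
    (h : ∀ (M : KModel) [IsAxModel P M] (w : M.W), KTr M φ w ↔ KTr M (compF P θ (IdF P)) w) :
    φ ∈ dra P :=
  ⟨θ, hθ, prf_of_forall_KTr fun M hM w =>
    have : IsAxModel P M := ⟨hP, hM _ rfl⟩
    KTr_iff.2 (h M w)⟩

variable (hP : GoodParams P)
include hP

lemma IdF_mem_dra : IdF P ∈ dra P :=
  mem_dra_of_forall_KTr_iff hP (oneFree_IdF hP) fun _ _ _ =>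
    (KTr_compF_IdF_iff (oneFree_IdF hP) (fun _ => isPairAt_of_KTr_IdF)
      fun _ _ ht => ht.KTr_IdF_of_right).symm

lemma or_mem_dra (hφ : φ ∈ dra P) (hψ : ψ ∈ dra P) : φ.or ψ ∈ dra P := by
  obtain ⟨α, hα, h1⟩ := exists_KTr_iff_of_mem_dra hφ
  obtain ⟨β, hβ, h2⟩ := exists_KTr_iff_of_mem_dra hψ
  refine mem_dra_of_forall_KTr_iff hP (θ := α.or β) (Finset.union_subset hα hβ) fun M _ w => ?_
  rw [KTr_or, h1, h2, KTr_compF_or]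

lemma negF_mem_dra (hφ : φ ∈ dra P) : negF P φ ∈ dra P := by
  obtain ⟨α, hα, h⟩ := exists_KTr_iff_of_mem_dra hφ
  have hρ := oneFree_compF hP hα (oneFree_IdF hP)
  have hθ := oneFree_pairF_and_not hP hρ
  refine mem_dra_of_forall_KTr_iff hP hθ fun M _ w => ?_
  rw [negF, KTr_and, KTr_not, h, ← KTr_not, ← KTr_and, KTr_compF_IdF_iff hθ
    (fun _ h => isPairAt_of_KTr_pairF (KTr_and.1 h).1) fun _ _ ht h => ?_]
  exact KTr_and.2 ⟨ht.KTr_pairF_left, fun hw => (KTr_and.1 h).2 (ht.KTr_compF_of_left hα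
    (oneFree_IdF hP) hw)⟩

lemma compF_mem_dra (hφ : φ ∈ dra P) (hψ : ψ ∈ dra P) : compF P φ ψ ∈ dra P := by
  obtain ⟨α, hα, h1⟩ := exists_KTr_iff_of_mem_dra hφ
  obtain ⟨β, hβ, h2⟩ := exists_KTr_iff_of_mem_dra hψ
  have hα' := oneFree_compF hP hα (oneFree_IdF hP)
  have hβ' := oneFree_compF hP hβ (oneFree_IdF hP)
  have hθ := oneFree_compF hP hα' hβ'
  refine mem_dra_of_forall_KTr_iff hP hθ fun M _ w => ?_
  rw [KTr_compF_congr (h1 M) (h2 M), KTr_compF_IdF_iff hθ (fun _ => isPairAt_of_KTr_compF)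
    fun _ _ ht => ht.KTr_compF_of_right hα' hβ']

lemma convF_mem_dra (hφ : φ ∈ dra P) : convF P φ ∈ dra P := by
  obtain ⟨α, hα, h⟩ := exists_KTr_iff_of_mem_dra hφ
  have hα' := oneFree_compF hP hα (oneFree_IdF hP)
  have hθ := oneFree_convF hP hα'
  refine mem_dra_of_forall_KTr_iff hP hθ fun M _ w => ?_
  rw [KTr_convF_congr (h M), KTr_compF_IdF_iff hθ (fun _ => isPairAt_of_KTr_convF)
    fun _ _ ht => ht.KTr_convF_of_right hα']

end Dra

end Ld3

/-- **Theorem (Dra is an algebra).** For every choice of the parameter formulas,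
the set `dra` contains `Id` and is closed under `+`, `−`, `∘` and `⌣`. -/
theorem dra_is_an_algebra (P : Params) (hP : GoodParams P) :
    IdF P ∈ dra P ∧
    (∀ φ ψ : Fmd3, φ ∈ dra P → ψ ∈ dra P → φ.or ψ ∈ dra P) ∧
    (∀ φ : Fmd3, φ ∈ dra P → negF P φ ∈ dra P) ∧
    (∀ φ ψ : Fmd3, φ ∈ dra P → ψ ∈ dra P → compF P φ ψ ∈ dra P) ∧
    (∀ φ : Fmd3, φ ∈ dra P → convF P φ ∈ dra P) :=
  ⟨Ld3.IdF_mem_dra hP, fun _ _ => Ld3.or_mem_dra hP, fun _ => Ld3.negF_mem_dra hP,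
    fun _ _ => Ld3.compF_mem_dra hP, fun _ => Ld3.convF_mem_dra hP⟩
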